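/- arXiv:math/0405381 — 11 statements merged into one kernel-verified Lean document; each statement's English description precedes it below -/
import Mathlib

section
/- Let R be a discrete valuation ring with uniformizer π and fraction field K, and let A be an R-algebra that is torsion-free as an R-module, such that A_K := K ⊗_R A is an integral domain which is finitely generated as a K-algebra. Suppose that for every nonzero f ∈ A_K there exists an R-algebra homomorphism φ : A → R whose K-linear extension φ_K : A_K → K satisfies φ_K(f) ≠ 0 (i.e., the R-points are Zariski-dense in the generic fiber). Then the only R-divisible element of A is 0. -/
open TensorProduct

/-! An `R`-algebra map `φ : A → R` sends an `R`-divisible `x` to an element of `R` divisible by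
every nonzero `r`, which is `0` because `R` is not a field. So `1 ⊗ x` is killed by every
`φ_K`, hence vanishes by density, and `x = 0` because `A` embeds in its localization `K ⊗[R] A`. -/

-- If `z ≠ 0`, then `z * z ∣ z` makes `z` a unit, so every nonzero `r ∣ z` is a unit.
theorem eq_zero_of_forall_dvd_of_not_isField {R : Type*} [CommRing R] [IsDomain R]
    (hR : ¬IsField R) {z : R} (h : ∀ r : R, r ≠ 0 → r ∣ z) : z = 0 := by
  by_contra hz
  have hunit : IsUnit z := by
    have hzz : z * z ∣ z * 1 := by simpa using h (z * z) (mul_ne_zero hz hz)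
    exact isUnit_of_dvd_one ((mul_dvd_mul_iff_left hz).mp hzz)
  refine hR ⟨⟨0, 1, zero_ne_one⟩, mul_comm, fun {r} hr => ?_⟩
  obtain ⟨s, hs⟩ := isUnit_iff_exists_inv.mp (isUnit_of_dvd_unit (h r hr) hunit)
  exact ⟨s, hs⟩

theorem TensorProduct.mk_one_injective_of_isFractionRing (R K M : Type*) [CommRing R]
    [CommRing K] [Algebra R K] [IsFractionRing R K] [AddCommGroup M] [Module R M]
    [Module.IsTorsionFree R M] : Function.Injective (TensorProduct.mk R K M 1) :=
  haveI := (isLocalizedModule_iff_isBaseChange (nonZeroDivisors R) K _).mpr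
    (TensorProduct.isBaseChange R M K)
  (IsLocalizedModule.injective_iff_isRegular (nonZeroDivisors R) _).mpr fun c =>
    Module.IsTorsionFree.isSMulRegular (isRegular_iff_mem_nonZeroDivisors.mpr c.2)

theorem stmt_0_general (R K A : Type*) [CommRing R] [IsDomain R] [IsDiscreteValuationRing R]
    [Field K] [Algebra R K] [IsFractionRing R K]
    [CommRing A] [Algebra R A] [NoZeroSMulDivisors R A]
    (hdense : ∀ f : K ⊗[R] A, f ≠ 0 →
      ∃ φ : A →ₐ[R] R,
        Algebra.TensorProduct.productMap (AlgHom.id R K) ((Algebra.ofId R K).comp φ) f ≠ 0)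
    (x : A) (hx : ∀ r : R, r ≠ 0 → ∃ y : A, x = r • y) :
    x = 0 := by
  have hφ : ∀ φ : A →ₐ[R] R, φ x = 0 := fun φ =>
    eq_zero_of_forall_dvd_of_not_isField (IsDiscreteValuationRing.not_isField R) fun r hr => by
      obtain ⟨y, rfl⟩ := hx r hr
      exact ⟨φ y, by simp⟩
  have h1 : (1 : K) ⊗ₜ[R] x = 0 := by
    by_contra h
    obtain ⟨φ, hφx⟩ := hdense _ h
    simp [hφ] at hφx
  exact TensorProduct.mk_one_injective_of_isFractionRing R K A (by simpa using h1)

/-- If the `R`-points of a model are Zariski-dense in the (integral,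
finite-type) generic fiber, then the coordinate ring contains no nonzero
`R`-divisible element. -/
theorem stmt_0 (R K A : Type*) [CommRing R] [IsDomain R] [IsDiscreteValuationRing R]
    [Field K] [Algebra R K] [IsFractionRing R K]
    [CommRing A] [Algebra R A] [NoZeroSMulDivisors R A]
    [IsDomain (K ⊗[R] A)] [Algebra.FiniteType K (K ⊗[R] A)]
    (hdense : ∀ f : K ⊗[R] A, f ≠ 0 →
      ∃ φ : A →ₐ[R] R,
        Algebra.TensorProduct.productMap (AlgHom.id R K) ((Algebra.ofId R K).comp φ) f ≠ 0)
    (x : A) (hx : ∀ r : R, r ≠ 0 → ∃ y : A, x = r • y) :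
    x = 0 :=
  stmt_0_general R K A hdense x hx
end

section
/- Let R be a discrete valuation ring with uniformizer π and fraction field K, and let A be an R-algebra that is torsion-free as an R-module, such that A_K := K ⊗_R A is an integral domain which is finitely generated as a K-algebra, of Krull dimension d. Suppose there exists an ideal I of A_κ := A/πA such that A_κ/I is an integral domain whose transcendence degree over κ is at least d. Then the only R-divisible element of A is 0. -/
/-!
Suppose `x ≠ 0` is divisible and lift an algebraically independent family `f : Fin d → B` to
`a : Fin d → A`. By Noether normalization and going up, a finitely generated domain over a field
contains no more algebraically independent elements than its Krull dimension, so the `d + 1`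
elements `x, a` of `A ⊆ K ⊗[R] A` are algebraically dependent over `R`. As `A` is a domain,
dividing a relation by the largest possible power of `x` produces a nonzero `Q` over `R` with
`x ∣ Q(a)`. Write `Q = π ^ m Q'` with `Q' ≢ 0 mod π`; since `x ∈ π ^ (m + 1) A` and `A` is
`π`-torsion free, `Q'(a) ∈ π A`, so `Q'(f) = 0` in `B`, contradicting the independence of `f`.
-/

open TensorProduct

theorem ringKrullDim_le_of_isIntegral (R S : Type*) [CommRing R] [CommRing S] [Algebra R S]
    [Algebra.IsIntegral R S] [FaithfulSMul R S] : ringKrullDim R ≤ ringKrullDim S := by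
  refine iSup_le fun l => ?_
  obtain ⟨P, -, hP, hPl⟩ :=
    Ideal.exists_ideal_over_prime_of_isIntegral l.head.asIdeal (⊥ : Ideal S) (by
      rw [← RingHom.ker_eq_comap_bot, (RingHom.injective_iff_ker_eq_bot _).mp
        (FaithfulSMul.algebraMap_injective R S)]
      exact bot_le)
  have : P.LiesOver l.head.asIdeal := ⟨hPl.symm⟩
  obtain ⟨L, hL, -⟩ := Ideal.exists_ltSeries_of_hasGoingUp l P
  exact hL ▸ Order.LTSeries.length_le_krullDim L

theorem natCard_le_ringKrullDim_of_algebraicIndependent {K A ι : Type*} [Field K] [CommRing A]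
    [IsDomain A] [Algebra K A] [Algebra.FiniteType K A] [Finite ι] {v : ι → A}
    (hv : AlgebraicIndependent K v) : (Nat.card ι : WithBot ℕ∞) ≤ ringKrullDim A := by
  obtain ⟨s, g, hg, hgi⟩ := exists_integral_inj_algHom_of_fg K A
  algebraize [g.toRingHom]
  have : FaithfulSMul (MvPolynomial (Fin s) K) A :=
    (faithfulSMul_iff_algebraMap_injective _ _).mpr hg
  have : IsScalarTower K (MvPolynomial (Fin s) K) A := .of_algebraMap_eq' g.comp_algebraMap.symm
  have htrdeg : Algebra.trdeg K A = s := by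
    have := lift_trdeg_add_eq K (MvPolynomial (Fin s) K) A
    rw [MvPolynomial.trdeg_of_isDomain, trdeg_eq_zero (R := MvPolynomial (Fin s) K)] at this
    simpa using this.symm
  have hcard : Nat.card ι ≤ s := by
    have := hv.lift_cardinalMk_le_trdeg
    rw [htrdeg, Cardinal.lift_natCast, Cardinal.lift_le_nat_iff, ← Nat.cast_card] at this
    exact_mod_cast this
  calc (Nat.card ι : WithBot ℕ∞) ≤ s := by exact_mod_cast hcard
    _ = ringKrullDim K + Nat.card (Fin s) := by simp [ringKrullDim_eq_zero_of_field]
    _ ≤ ringKrullDim (MvPolynomial (Fin s) K) :=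
        ringKrullDim_add_natCard_le_ringKrullDim_mvPolynomial _
    _ ≤ ringKrullDim A := ringKrullDim_le_of_isIntegral _ _

theorem AlgebraicIndependent.tensorProduct_includeRight {R K A ι : Type*} [CommRing R]
    [IsDomain R] [Field K] [Algebra R K] [IsFractionRing R K] [CommRing A] [Algebra R A]
    [Module.Flat R A] {v : ι → A} (hv : AlgebraicIndependent R v) :
    AlgebraicIndependent K (Algebra.TensorProduct.includeRight ∘ v : ι → K ⊗[R] A) :=
  have := IsLocalization.isAlgebraic K (nonZeroDivisors R)
  (hv.map' (Algebra.TensorProduct.includeRight_injective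
    (IsFractionRing.injective R K))).extendScalars K

theorem MvPolynomial.aeval_option_elim {R A σ : Type*} [CommRing R] [CommRing A] [Algebra R A]
    (y : A) (s : σ → A) (P : MvPolynomial (Option σ) R) :
    aeval (fun o => o.elim y s) P =
      Polynomial.eval₂ (aeval (R := R) s).toRingHom y (optionEquivLeft R σ P) := by
  change _ = Polynomial.aevalTower (aeval s) y ((optionEquivLeft R σ).toAlgHom P)
  rw [← AlgHom.comp_apply]
  congr 1
  ext (_ | i) <;> simp

theorem exists_ne_zero_dvd_aeval_of_not_algebraicIndependent {R A σ : Type*} [CommRing R]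
    [CommRing A] [IsDomain A] [Algebra R A] {x : A} (hx : x ≠ 0) {a : σ → A}
    (h : ¬ AlgebraicIndependent R fun o : Option σ => o.elim x a) :
    ∃ Q : MvPolynomial σ R, Q ≠ 0 ∧ x ∣ MvPolynomial.aeval a Q := by
  obtain ⟨P, hP, hP0⟩ :
      ∃ P, MvPolynomial.aeval (fun o : Option σ => o.elim x a) P = 0 ∧ P ≠ 0 := by
    simpa [algebraicIndependent_iff] using h
  rw [MvPolynomial.aeval_option_elim] at hP
  obtain ⟨i, hi, hmem⟩ := Ideal.exists_coeff_ne_zero_mem_comap_of_root_mem hx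
    (Ideal.mem_span_singleton_self x)
    ((map_ne_zero_iff _ (MvPolynomial.optionEquivLeft R σ).injective).mpr hP0) hP
  exact ⟨_, hi, Ideal.mem_span_singleton.mp hmem⟩

theorem MvPolynomial.exists_eq_C_pow_mul_map_ne_zero {R S σ : Type*} [CommRing R] [IsDomain R]
    [UniqueFactorizationMonoid R] [CommRing S] (q : R →+* S) {π : R} (hπ : ¬ IsUnit π)
    (hq : ∀ r, q r = 0 ↔ π ∣ r) {P : MvPolynomial σ R} (hP : P ≠ 0) :
    ∃ (m : ℕ) (Q : MvPolynomial σ R), P = C π ^ m * Q ∧ map q Q ≠ 0 := by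
  obtain ⟨m, Q, hQ, rfl⟩ := WfDvdMonoid.max_power_factor' (x := C π) hP
    fun h => hπ (by simpa using h.map constantCoeff)
  exact ⟨m, Q, rfl, (C_dvd_iff_map_hom_eq_zero q π hq Q).not.mp hQ⟩

theorem exists_eq_smul_of_dvd_pow_smul {R A : Type*} [CommRing R] [IsDomain R] [CommRing A]
    [Algebra R A] [NoZeroSMulDivisors R A] {π : R} (hπ : π ≠ 0) {x c : A}
    (hx : ∀ r : R, r ≠ 0 → ∃ y, x = r • y) {m : ℕ} (h : x ∣ π ^ m • c) : ∃ w, c = π • w := by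
  obtain ⟨y, rfl⟩ := hx (π ^ (m + 1)) (pow_ne_zero _ hπ)
  obtain ⟨z, hz⟩ := h
  refine ⟨y * z, smul_right_injective A (pow_ne_zero m hπ) (?_ : π ^ m • _ = π ^ m • _)⟩
  rw [hz, pow_succ, mul_smul, smul_mul_assoc, smul_mul_assoc]

theorem stmt_1_general (R K κ A B : Type*) [CommRing R] [IsDomain R] [IsDiscreteValuationRing R]
    [Field K] [Algebra R K] [IsFractionRing R K]
    [Field κ] [Algebra R κ]
    (π : R) (hπ : Irreducible π)
    (hκker : RingHom.ker (algebraMap R κ) = Ideal.span {π})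
    [CommRing A] [Algebra R A] [NoZeroSMulDivisors R A]
    [IsDomain (K ⊗[R] A)] [Algebra.FiniteType K (K ⊗[R] A)]
    (d : ℕ) (hd : ringKrullDim (K ⊗[R] A) = d)
    [CommRing B] [Algebra R B] [Algebra κ B] [Algebra A B]
    [IsScalarTower R κ B] [IsScalarTower R A B]
    (hBsurj : Function.Surjective (algebraMap A B))
    (hπB : algebraMap R B π = 0)
    (htrdeg : ∃ f : Fin d → B, AlgebraicIndependent κ f)
    (x : A) (hx : ∀ r : R, r ≠ 0 → ∃ y : A, x = r • y) :
    x = 0 := by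
  by_contra hx0
  obtain ⟨f, hf⟩ := htrdeg
  choose a ha using fun i => hBsurj (f i)
  have := (Algebra.TensorProduct.includeRight_injective (A := K) (B := A)
    (IsFractionRing.injective R K)).isDomain
  have hdep : ¬ AlgebraicIndependent R fun o : Option (Fin d) => o.elim x a := fun hind => by
    have := natCard_le_ringKrullDim_of_algebraicIndependent
      (hind.tensorProduct_includeRight (K := K))
    rw [hd, Finite.card_option, Nat.card_fin] at this
    exact absurd (by exact_mod_cast this) (Nat.not_succ_le_self d)
  obtain ⟨Q, hQ0, hxQ⟩ := exists_ne_zero_dvd_aeval_of_not_algebraicIndependent hx0 hdep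
  have hker (r : R) : algebraMap R κ r = 0 ↔ π ∣ r := by
    rw [← RingHom.mem_ker, hκker, Ideal.mem_span_singleton]
  obtain ⟨m, Q, rfl, hQ⟩ :=
    MvPolynomial.exists_eq_C_pow_mul_map_ne_zero _ hπ.not_isUnit hker hQ0
  rw [map_mul, map_pow, MvPolynomial.aeval_C, ← map_pow, ← Algebra.smul_def] at hxQ
  obtain ⟨w, hw⟩ := exists_eq_smul_of_dvd_pow_smul hπ.ne_zero hx hxQ
  have hQB : MvPolynomial.aeval f Q = algebraMap A B (MvPolynomial.aeval a Q) := by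
    rw [← funext ha]
    exact (MvPolynomial.comp_aeval_apply a (IsScalarTower.toAlgHom R A B) Q).symm
  refine hQ (hf.eq_zero_of_aeval_eq_zero _ ?_)
  rw [MvPolynomial.aeval_map_algebraMap, hQB, hw, Algebra.smul_def, map_mul,
    ← IsScalarTower.algebraMap_apply, hπB, zero_mul]

/-- If the special fiber admits an integral quotient of transcendence
degree at least the dimension `d` of the (integral, finite-type) generic fiber, then
the coordinate ring contains no nonzero `R`-divisible element.  The quotient
`A_κ / I` is encoded as a surjection of `A` onto a domain `B` killing `π`,
where `B` is an algebra over the residue field `κ` of `R`. -/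
theorem stmt_1 (R K κ A B : Type*) [CommRing R] [IsDomain R] [IsDiscreteValuationRing R]
    [Field K] [Algebra R K] [IsFractionRing R K]
    [Field κ] [Algebra R κ]
    (hκsurj : Function.Surjective (algebraMap R κ))
    (π : R) (hπ : Irreducible π)
    (hκker : RingHom.ker (algebraMap R κ) = Ideal.span {π})
    [CommRing A] [Algebra R A] [NoZeroSMulDivisors R A]
    [IsDomain (K ⊗[R] A)] [Algebra.FiniteType K (K ⊗[R] A)]
    (d : ℕ) (hd : ringKrullDim (K ⊗[R] A) = d)
    [CommRing B] [IsDomain B] [Algebra R B] [Algebra κ B] [Algebra A B]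
    [IsScalarTower R κ B] [IsScalarTower R A B]
    (hBsurj : Function.Surjective (algebraMap A B))
    (hπB : algebraMap R B π = 0)
    (htrdeg : ∃ f : Fin d → B, AlgebraicIndependent κ f)
    (x : A) (hx : ∀ r : R, r ≠ 0 → ∃ y : A, x = r • y) :
    x = 0 :=
  stmt_1_general R K κ A B π hπ hκker d hd hBsurj hπB htrdeg x hx
end

section
/- Let R be a complete discrete valuation ring with fraction field K, let V be a K-vector space of at most countable dimension, and let L be an R-submodule of V such that the only R-divisible element of L is 0. Then L is a free R-module. -/
/-!
Exhaust `V` by a chain `0 = W₀ ≤ W₁ ≤ ⋯` with `W (k+1) = W k ⊔ K ∙ v k`, and put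
`L k = L ⊓ W k`. It suffices to show `L (k+1) = L k ⊔ R ∙ e k` with `e k = 0` or `e k ∉ W k`:
the nonzero `e k` are then a basis of `L`.

To find `e k`, take `x₀ ∈ L (k+1)` outside `W k` and `n` maximal with
`x₀ ∈ W k + π ^ n • L (k+1)`, say `x₀ - π ^ n • e ∈ W k`. Any `x ∈ L (k+1)` is `c • e` modulo
`W k` for some `c ∈ K`; if `c ∉ R` then `c⁻¹ ∈ π R` and `x₀ ∈ W k + π ^ (n+1) • L (k+1)`, so
`c ∈ R` and `x ∈ L k ⊔ R ∙ e`. The maximal `n` exists: otherwise `x₀ - π ^ n • y n ∈ L k`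
is a `π`-adic Cauchy sequence in the finitely generated, hence complete, module `L k`, and
`x₀` minus its limit is divisible in `L`, hence zero, which puts `x₀` in `W k`.
-/

open Set Submodule

theorem IsPrecomplete.of_basis {R M ι : Type*} [CommRing R] [AddCommGroup M] [Module R M]
    [Finite ι] {I : Ideal R} [IsPrecomplete I R] (b : Module.Basis ι R M) :
    IsPrecomplete I M := by
  have := Fintype.ofFinite ι
  refine ⟨fun f hf ↦ ?_⟩
  have hcoord (i : ι) : ∃ c : R, ∀ n, b.repr (f n) i ≡ c [SMOD (I ^ n • ⊤ : Ideal R)] :=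
    IsPrecomplete.prec ‹_› fun hmn ↦ (hf hmn).map (b.coord i) |>.mono <| by
      rw [map_smul'']; exact smul_mono_right _ le_top
  choose c hc using hcoord
  refine ⟨∑ i, c i • b i, fun n ↦ ?_⟩
  conv_lhs => rw [← b.sum_repr (f n)]
  refine SModEq.sum fun i _ ↦ ?_
  rw [SModEq.sub_mem, ← sub_smul]
  refine smul_mem_smul ?_ mem_top
  simpa [SModEq.sub_mem] using hc i n

theorem IsPrecomplete.of_finite_of_isTorsionFree {R M : Type*} [CommRing R] [IsDomain R]
    [IsPrincipalIdealRing R] {I : Ideal R} [IsPrecomplete I R] [AddCommGroup M] [Module R M]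
    [Module.Finite R M] [Module.IsTorsionFree R M] : IsPrecomplete I M :=
  .of_basis (Module.Free.chooseBasis R M)

theorem smodEq_pow_span_singleton_iff {R M : Type*} [CommRing R] [AddCommGroup M] [Module R M]
    (π : R) (k : ℕ) (x y : M) :
    x ≡ y [SMOD ((Ideal.span {π}) ^ k • ⊤ : Submodule R M)] ↔ ∃ z, x - y = π ^ k • z := by
  simp [SModEq.sub_mem, Ideal.span_singleton_pow, ideal_span_singleton_smul,
    mem_smul_pointwise_iff_exists, eq_comm]

theorem IsPrecomplete.exists_forall_sub_eq_pow_smul {R M : Type*} [CommRing R] [AddCommGroup M]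
    [Module R M] {π : R} (hM : IsPrecomplete (Ideal.span {π}) M) {f : ℕ → M}
    (hf : ∀ {k l}, k ≤ l → ∃ z, f k - f l = π ^ k • z) :
    ∃ m, ∀ k, ∃ z, f k - m = π ^ k • z := by
  simp_rw [← smodEq_pow_span_singleton_iff] at hf ⊢
  exact hM.prec hf

theorem Submodule.exists_sub_smul_mem_of_mem_sup_span_singleton {K V : Type*} [Field K]
    [AddCommGroup V] [Module K V] {W : Submodule K V} {v x e : V} (hx : x ∈ W ⊔ K ∙ v)
    (he : e ∈ W ⊔ K ∙ v) (heW : e ∉ W) : ∃ c : K, x - c • e ∈ W := by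
  obtain ⟨w, hw, _, hy, rfl⟩ := mem_sup.mp hx
  obtain ⟨a, rfl⟩ := mem_span_singleton.mp hy
  obtain ⟨w', hw', _, hy', rfl⟩ := mem_sup.mp he
  obtain ⟨b, rfl⟩ := mem_span_singleton.mp hy'
  have hb : b ≠ 0 := by
    rintro rfl
    exact heW (by simpa using hw')
  refine ⟨a / b, ?_⟩
  convert W.sub_mem hw (W.smul_mem (a / b) hw') using 1
  rw [smul_add, smul_smul, div_mul_cancel₀ _ hb]
  abel

theorem exists_chain_sup_span_singleton_of_rank_le_aleph0 {K V : Type*} [Field K]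
    [AddCommGroup V] [Module K V] (hrank : Module.rank K V ≤ Cardinal.aleph0) :
    ∃ (W : ℕ → Submodule K V) (f : ℕ → V),
      W 0 = ⊥ ∧ (∀ k, W (k + 1) = W k ⊔ K ∙ f k) ∧ ∀ x, ∃ k, x ∈ W k := by
  let b := Module.Basis.ofVectorSpace K V
  have : Countable (Module.Basis.ofVectorSpaceIndex K V) :=
    Cardinal.mk_le_aleph0_iff.mp (b.mk_eq_rank'' ▸ hrank)
  obtain ⟨f, hf⟩ := ((countable_range b).insert 0).exists_eq_range (insert_nonempty 0 _)
  have hmono : Monotone fun k ↦ span K (f '' Iio k) := fun j k hjk ↦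
    span_mono (image_mono (Iio_subset_Iio hjk))
  refine ⟨fun k ↦ span K (f '' Iio k), f, by simp, fun k ↦ ?_, fun x ↦ ?_⟩
  · dsimp only
    rw [← Order.succ_eq_add_one, Order.Iio_succ_eq_insert, image_insert_eq, span_insert,
      sup_comm]
  · rw [← mem_iSup_of_directed _ hmono.directed_le, ← span_iUnion, ← image_iUnion, iUnion_Iio,
      image_univ, ← hf, span_insert_zero, b.span_eq]
    exact mem_top

theorem Submodule.free_iSup_of_eq_sup_span_singleton {R V : Type*} [CommRing R]
    [AddCommGroup V] [Module R V] {N : ℕ → Submodule R V} {e : ℕ → V} (h0 : N 0 = ⊥)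
    (hsucc : ∀ k, N (k + 1) = N k ⊔ R ∙ e k)
    (hind : ∀ k, e k ≠ 0 → ∀ r : R, r • e k ∈ N k → r = 0) :
    Module.Free R ↥(⨆ k, N k) := by
  set S := {k | e k ≠ 0}
  have hstage (k : ℕ) :
      LinearIndepOn R e (S ∩ Iio k) ∧ span R (e '' (S ∩ Iio k)) = N k := by
    induction k with
    | zero => simp [h0]
    | succ k ih =>
      rw [hsucc, ← ih.2, ← Order.succ_eq_add_one, Order.Iio_succ_eq_insert]
      by_cases hk : e k = 0
      · rw [inter_insert_of_notMem (by simpa [S] using hk), hk, span_zero_singleton, sup_bot_eq]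
        exact ⟨ih.1, rfl⟩
      · rw [inter_insert_of_mem hk, image_insert_eq, span_insert, sup_comm]
        exact ⟨ih.1.insert' fun r hr ↦ hind k hk r (ih.2 ▸ hr), rfl⟩
  have hS : S = ⋃ k, S ∩ Iio k := by
    simp [← inter_iUnion, iUnion_Iio]
  have hli : LinearIndepOn R e S := hS ▸ linearIndepOn_iUnion_of_directed
    (Monotone.directed_le fun j k hjk ↦ inter_subset_inter_right S (Iio_subset_Iio hjk))
    fun k ↦ (hstage k).1
  have hspan : span R (range fun i : S ↦ e i) = ⨆ k, N k := by
    rw [← image_eq_range, hS, image_iUnion, span_iUnion]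
    exact iSup_congr fun k ↦ (hstage k).2
  have := Module.Free.of_basis (Module.Basis.span hli)
  exact .of_equiv (LinearEquiv.ofEq _ _ hspan)

section FractionField

variable {R K V : Type*} [CommRing R] [Field K] [Algebra R K] [IsFractionRing R K]

theorem IsDiscreteValuationRing.exists_algebraMap_eq_or_algebraMap_mul_eq_one
    [IsDomain R] [IsDiscreteValuationRing R] {π : R} (hπ : Irreducible π) (c : K) :
    (∃ r, algebraMap R K r = c) ∨ ∃ s, algebraMap R K (π * s) * c = 1 := by
  obtain hc | ⟨r, hr⟩ := ValuationRing.isInteger_or_isInteger R c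
  · exact .inl hc
  obtain rfl | hc := eq_or_ne c 0
  · exact .inl ⟨0, map_zero _⟩
  by_cases hru : IsUnit r
  · refine .inl ⟨↑hru.unit⁻¹, ?_⟩
    rw [map_units_inv, IsUnit.unit_spec, hr, inv_inv]
  obtain ⟨s, rfl⟩ : ∃ s, s * π = r := by
    rw [← Ideal.mem_span_singleton', ← hπ.maximalIdeal_eq]
    exact (IsLocalRing.mem_maximalIdeal r).mpr hru
  exact .inr ⟨s, by rw [mul_comm π, hr, inv_mul_cancel₀ hc]⟩

variable [AddCommGroup V] [Module K V] [Module R V] [IsScalarTower R K V]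

theorem Submodule.smul_mem_iff_of_isFractionRing (W : Submodule K V) {r : R} (hr : r ≠ 0)
    {x : V} : r • x ∈ W ↔ x ∈ W := by
  rw [← algebraMap_smul K r x]
  exact W.smul_mem_iff ((map_ne_zero_iff _ (IsFractionRing.injective R K)).mpr hr)

theorem mem_of_forall_exists_sub_pow_smul_mem [IsDomain R] [IsDiscreteValuationRing R] {π : R}
    (hπ : Irreducible π) {L : Submodule R V}
    (hdiv : ∀ x ∈ L, (∀ r : R, r ≠ 0 → ∃ y ∈ L, x = r • y) → x = 0) {W : Submodule K V}
    (hLW : IsPrecomplete (Ideal.span {π}) ↥(L ⊓ W.restrictScalars R)) {x : V} (hxL : x ∈ L)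
    (hx : ∀ k : ℕ, ∃ y ∈ L, x - π ^ k • y ∈ W) : x ∈ W := by
  choose y hyL hyW using hx
  let n (k : ℕ) : ↥(L ⊓ W.restrictScalars R) :=
    ⟨x - π ^ k • y k, L.sub_mem hxL (L.smul_mem _ (hyL k)), hyW k⟩
  have hcauchy {k l : ℕ} (hkl : k ≤ l) : ∃ z, n k - n l = π ^ k • z := by
    obtain ⟨j, rfl⟩ := Nat.exists_eq_add_of_le hkl
    have hdiff : x - π ^ k • y k - (x - π ^ (k + j) • y (k + j))
        = π ^ k • (π ^ j • y (k + j) - y k) := by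
      rw [smul_sub, smul_smul, ← pow_add]
      abel
    have hW : π ^ j • y (k + j) - y k ∈ W := by
      rw [← W.smul_mem_iff_of_isFractionRing (pow_ne_zero k hπ.ne_zero), ← hdiff]
      exact W.sub_mem (hyW k) (hyW (k + j))
    exact ⟨⟨_, L.sub_mem (L.smul_mem _ (hyL _)) (hyL k), hW⟩, Subtype.ext hdiff⟩
  obtain ⟨m, hm⟩ := hLW.exists_forall_sub_eq_pow_smul hcauchy
  have hdivisible (k : ℕ) : ∃ z ∈ L, x - m = π ^ k • z := by
    obtain ⟨z, hz⟩ := hm k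
    refine ⟨y k + z, L.add_mem (hyL k) z.2.1, ?_⟩
    rw [smul_add, ← Submodule.coe_smul, ← hz]
    change _ = _ + (x - π ^ k • y k - m)
    abel
  have hxm : x - m = 0 := hdiv _ (L.sub_mem hxL m.2.1) fun r hr ↦ by
    obtain ⟨k, u, rfl⟩ := IsDiscreteValuationRing.eq_unit_mul_pow_irreducible hr hπ
    obtain ⟨z, hzL, hz⟩ := hdivisible k
    refine ⟨(↑u⁻¹ : R) • z, L.smul_mem _ hzL, ?_⟩
    rw [hz, smul_smul, mul_comm (u : R), mul_assoc, Units.mul_inv, mul_one]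
  rw [sub_eq_zero.mp hxm]
  exact m.2.2

theorem exists_le_inf_sup_span_singleton [IsDomain R] [IsDiscreteValuationRing R] {π : R}
    (hπ : Irreducible π) {W : Submodule K V} {v : V} {M : Submodule R V}
    (hM : M ≤ (W ⊔ K ∙ v).restrictScalars R)
    (hred : ∀ x ∈ M, (∀ k : ℕ, ∃ y ∈ M, x - π ^ k • y ∈ W) → x ∈ W) :
    ∃ e ∈ M, (e ∈ W → e = 0) ∧ M ≤ M ⊓ W.restrictScalars R ⊔ R ∙ e := by
  by_cases hMW : M ≤ W.restrictScalars R
  · exact ⟨0, M.zero_mem, fun _ ↦ rfl, fun x hx ↦ mem_sup_left ⟨hx, hMW hx⟩⟩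
  obtain ⟨x₀, hx₀M, hx₀W⟩ := SetLike.not_le_iff_exists.mp hMW
  let P (k : ℕ) : Prop := ∃ y ∈ M, x₀ - π ^ k • y ∈ W
  obtain ⟨k, ⟨e, heM, he⟩, hk⟩ : ∃ k, P k ∧ ¬P (k + 1) := by
    by_contra! h
    exact hx₀W (hred x₀ hx₀M fun k ↦ Nat.rec ⟨x₀, hx₀M, by simp⟩ h k)
  have heW : e ∉ W := fun heW ↦ hx₀W <| by
    simpa using W.add_mem he (W.smul_of_tower_mem (π ^ k) heW)
  refine ⟨e, heM, fun h ↦ absurd h heW, fun x hxM ↦ ?_⟩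
  obtain ⟨c, hc⟩ := exists_sub_smul_mem_of_mem_sup_span_singleton (hM hxM) (hM heM) heW
  obtain ⟨r, rfl⟩ | ⟨s, hs⟩ :=
    IsDiscreteValuationRing.exists_algebraMap_eq_or_algebraMap_mul_eq_one hπ c
  · rw [algebraMap_smul] at hc
    rw [← sub_add_cancel x (r • e)]
    exact add_mem_sup ⟨M.sub_mem hxM (M.smul_mem r heM), hc⟩
      (smul_mem _ r (mem_span_singleton_self e))
  · -- `e ≡ (π * s) • x` modulo `W`, so `x₀ ∈ W + π ^ (k + 1) • M`, against the choice of `k`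
    refine absurd ⟨s • x, M.smul_mem s hxM, ?_⟩ hk
    have hx : (π * s) • x - e ∈ W := by
      have := W.smul_mem (algebraMap R K (π * s)) hc
      rwa [smul_sub, smul_smul, hs, one_smul, algebraMap_smul] at this
    convert W.sub_mem he (W.smul_of_tower_mem (π ^ k) hx) using 1
    rw [smul_sub, smul_smul, smul_smul, pow_succ, mul_assoc]
    abel

theorem exists_inf_sup_eq_sup_span_singleton [IsDomain R] [IsDiscreteValuationRing R] {π : R}
    (hπ : Irreducible π) {L : Submodule R V}
    (hdiv : ∀ x ∈ L, (∀ r : R, r ≠ 0 → ∃ y ∈ L, x = r • y) → x = 0) (W : Submodule K V) (v : V)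
    (hLW : IsPrecomplete (Ideal.span {π}) ↥(L ⊓ W.restrictScalars R)) :
    ∃ e, (e ∈ W → e = 0) ∧
      L ⊓ (W ⊔ K ∙ v).restrictScalars R = L ⊓ W.restrictScalars R ⊔ R ∙ e := by
  have hWle : W.restrictScalars R ≤ (W ⊔ K ∙ v).restrictScalars R :=
    restrictScalars_mono R le_sup_left
  obtain ⟨e, heM, he0, hle⟩ := exists_le_inf_sup_span_singleton hπ inf_le_right
    fun x hx hk ↦ mem_of_forall_exists_sub_pow_smul_mem hπ hdiv hLW hx.1
      fun k ↦ (hk k).imp fun _ hy ↦ ⟨hy.1.1, hy.2⟩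
  rw [inf_assoc, inf_eq_right.mpr hWle] at hle
  exact ⟨e, he0, le_antisymm hle <|
    sup_le (inf_le_inf_left L hWle) ((span_singleton_le_iff_mem _ _).mpr heM)⟩

end FractionField

/-- Over a complete DVR `R` with fraction field `K`, an `R`-submodule
of a `K`-vector space of at most countable dimension with no nonzero `R`-divisible
element is a free `R`-module. -/
theorem stmt_2 (R K V : Type*) [CommRing R] [IsDomain R] [IsDiscreteValuationRing R]
    [IsAdicComplete (IsLocalRing.maximalIdeal R) R]
    [Field K] [Algebra R K] [IsFractionRing R K]
    [AddCommGroup V] [Module K V] [Module R V] [IsScalarTower R K V]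
    (hrank : Module.rank K V ≤ Cardinal.aleph0)
    (L : Submodule R V)
    (hdiv : ∀ x ∈ L, (∀ r : R, r ≠ 0 → ∃ y ∈ L, x = r • y) → x = 0) :
    Module.Free R L := by
  obtain ⟨π, hπ⟩ := IsDiscreteValuationRing.exists_irreducible R
  obtain ⟨W, f, hW0, hWsucc, hWexh⟩ := exists_chain_sup_span_singleton_of_rank_le_aleph0 hrank
  have : Module.IsTorsionFree R V := .trans_faithfulSMul R K V
  let N (k : ℕ) : Submodule R V := L ⊓ (W k).restrictScalars R
  have hstep (k : ℕ) (hk : (N k).FG) :=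
    have : Module.Finite R (N k) := Module.Finite.iff_fg.mpr hk
    exists_inf_sup_eq_sup_span_singleton hπ hdiv (W k) (f k)
      (hπ.maximalIdeal_eq ▸ IsPrecomplete.of_finite_of_isTorsionFree)
  have hfg (k : ℕ) : (N k).FG := by
    induction k with
    | zero => simp [N, hW0, fg_bot]
    | succ k ih =>
      obtain ⟨e, -, he⟩ := hstep k ih
      simp only [N, hWsucc, he]
      exact ih.sup (fg_span_singleton e)
  choose e he0 heq using fun k ↦ hstep k (hfg k)
  have hL : ⨆ k, N k = L := le_antisymm (iSup_le fun _ ↦ inf_le_left) fun x hx ↦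
    have ⟨k, hk⟩ := hWexh x
    mem_iSup_of_mem k ⟨hx, hk⟩
  have := free_iSup_of_eq_sup_span_singleton (N := N) (e := e) (by simp [N, hW0])
    (fun k ↦ by simp only [N, hWsucc, heq]) fun k hk r hr ↦ by
      by_contra hr0
      exact hk (he0 k (((W k).smul_mem_iff_of_isFractionRing hr0).mp hr.2))
  exact .of_equiv (LinearEquiv.ofEq _ _ hL)
end

section
/- Let R be a complete discrete valuation ring with fraction field K. Then Ext¹_R(K, R) = 0; equivalently, every short exact sequence of R-modules 0 → R → M → K → 0 splits. -/
/-!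
Write `K = R[1/ϖ]` for a uniformizer `ϖ`. An `R`-linear map `K → M` is the same as a sequence
`uₙ ∈ M` with `ϖ • uₙ₊₁ = uₙ` (the image of `ϖ⁻ⁿ`), so a section of `g` amounts to such a sequence
lifting `ϖ⁻ⁿ`. Arbitrary lifts `mₙ` miss this by defects `ϖ • mₙ₊₁ - mₙ = f aₙ` with `aₙ ∈ R`;
they are corrected to `uₙ = mₙ + f bₙ` once `bₙ = aₙ + ϖ bₙ₊₁`, which the `ϖ`-adically convergent
series `bₙ = ∑ₖ ϖᵏ aₙ₊ₖ` solves in the complete ring `R`.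
-/

section AdicSeries

variable {R M : Type*} [CommRing R] [AddCommGroup M] [Module R M]

def shiftedPartialSum (ϖ : R) (a : ℕ → M) (n N : ℕ) : M :=
  ∑ k ∈ Finset.range N, ϖ ^ k • a (n + k)

theorem shiftedPartialSum_add (ϖ : R) (a : ℕ → M) (n N k : ℕ) :
    shiftedPartialSum ϖ a n (N + k) =
      shiftedPartialSum ϖ a n N + ϖ ^ N • shiftedPartialSum ϖ a (n + N) k := by
  simp only [shiftedPartialSum, Finset.sum_range_add, Finset.smul_sum, smul_smul, ← pow_add,
    add_assoc]

theorem pow_smul_mem_span_singleton_pow_smul_top (ϖ : R) (N : ℕ) (x : M) :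
    ϖ ^ N • x ∈ (Ideal.span {ϖ} ^ N • ⊤ : Submodule R M) :=
  Submodule.smul_mem_smul
    (by rw [Ideal.span_singleton_pow]; exact Ideal.mem_span_singleton_self _) trivial

theorem exists_eq_add_smul_succ (ϖ : R) [IsAdicComplete (Ideal.span {ϖ}) M] (a : ℕ → M) :
    ∃ b : ℕ → M, ∀ n, b n = a n + ϖ • b (n + 1) := by
  have hcauchy (n : ℕ) {N N' : ℕ} (h : N ≤ N') : shiftedPartialSum ϖ a n N ≡
      shiftedPartialSum ϖ a n N' [SMOD (Ideal.span {ϖ} ^ N • ⊤ : Submodule R M)] := by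
    obtain ⟨k, rfl⟩ := Nat.exists_eq_add_of_le h
    rw [shiftedPartialSum_add, SModEq.sub_mem, sub_add_cancel_left, neg_mem_iff]
    exact pow_smul_mem_span_singleton_pow_smul_top ϖ N _
  choose b hb using fun n ↦ IsPrecomplete.prec inferInstance (hcauchy n)
  refine ⟨b, fun n ↦ (IsHausdorff.eq_iff_smodEq (I := Ideal.span {ϖ})).mpr fun N ↦ ?_⟩
  have hstep :
      shiftedPartialSum ϖ a n (1 + N) = a n + ϖ • shiftedPartialSum ϖ a (n + 1) N := by
    rw [shiftedPartialSum_add]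
    simp [shiftedPartialSum]
  calc b n ≡ shiftedPartialSum ϖ a n (1 + N) [SMOD (Ideal.span {ϖ} ^ N • ⊤ : Submodule R M)] :=
        ((hb n (1 + N)).mono (Submodule.smul_mono_left (Ideal.pow_le_pow_right (by omega)))).symm
    _ = a n + ϖ • shiftedPartialSum ϖ a (n + 1) N := hstep
    _ ≡ a n + ϖ • b (n + 1) [SMOD (Ideal.span {ϖ} ^ N • ⊤ : Submodule R M)] :=
        SModEq.add SModEq.rfl ((hb (n + 1) N).smul ϖ)

end AdicSeries

theorem smul_eq_mul_pow_smul_add {R M : Type*} [CommSemiring R] [AddCommMonoid M] [Module R M]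
    {ϖ : R} {v : ℕ → M} (hv : ∀ n, ϖ • v (n + 1) = v n) (r : R) (n k : ℕ) :
    r • v n = (r * ϖ ^ k) • v (n + k) := by
  induction k generalizing n with
  | zero => simp
  | succ k ih => rw [ih, ← hv (n + k), smul_smul, pow_succ, mul_assoc, add_assoc]

namespace IsLocalization.Away

variable {R S : Type*} [CommRing R] [CommRing S] [Algebra R S] (ϖ : R) [IsLocalization.Away ϖ S]

theorem smul_invSelf_pow_succ (n : ℕ) : ϖ • invSelf (S := S) ϖ ^ (n + 1) = invSelf ϖ ^ n := by
  rw [pow_succ', Algebra.smul_def, ← mul_assoc, mul_invSelf, one_mul]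

theorem exists_eq_smul_invSelf_pow (x : S) : ∃ (r : R) (n : ℕ), x = r • invSelf ϖ ^ n := by
  obtain ⟨n, r, h⟩ := surj ϖ x
  refine ⟨r, n, ?_⟩
  rw [Algebra.smul_def, ← h, mul_assoc, ← mul_pow, mul_invSelf, one_pow, mul_one]

theorem algebraMap_eq_of_smul_invSelf_pow_eq {s s' : R} {N : ℕ}
    (h : s • invSelf ϖ ^ N = (s' • invSelf ϖ ^ N : S)) :
    algebraMap R S s = algebraMap R S s' := by
  have := congrArg (· * algebraMap R S ϖ ^ N) h
  simpa only [Algebra.smul_def, mul_assoc, mul_comm (invSelf ϖ ^ N), ← mul_pow, mul_invSelf,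
    one_pow, mul_one] using this

variable {M : Type*} [AddCommGroup M] [Module R M]

theorem smul_eq_smul_of_smul_invSelf_pow_eq {u : ℕ → M} (hu : ∀ n, ϖ • u (n + 1) = u n)
    {r r' : R} {n n' : ℕ} (h : r • invSelf ϖ ^ n = (r' • invSelf ϖ ^ n' : S)) :
    r • u n = r' • u n' := by
  have hS := smul_invSelf_pow_succ (S := S) ϖ
  rw [smul_eq_mul_pow_smul_add hS r n n', smul_eq_mul_pow_smul_add hS r' n' n, add_comm n'] at h
  obtain ⟨k, hk⟩ := exists_of_eq ϖ (algebraMap_eq_of_smul_invSelf_pow_eq ϖ h)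
  rw [smul_eq_mul_pow_smul_add hu r n (n' + k), smul_eq_mul_pow_smul_add hu r' n' (n + k),
    ← add_assoc, ← add_assoc, add_comm n' n, pow_add, pow_add]
  congr 1
  linear_combination hk

theorem exists_linearMap_smul_invSelf_pow {u : ℕ → M} (hu : ∀ n, ϖ • u (n + 1) = u n) :
    ∃ h : S →ₗ[R] M, ∀ (r : R) (n : ℕ), h (r • invSelf ϖ ^ n) = r • u n := by
  have hS := smul_invSelf_pow_succ (S := S) ϖ
  choose r n hx using exists_eq_smul_invSelf_pow (S := S) ϖ
  have hspec (x : S) (s : R) (m : ℕ) (hxs : x = s • invSelf ϖ ^ m) : r x • u (n x) = s • u m :=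
    smul_eq_smul_of_smul_invSelf_pow_eq ϖ hu ((hx x).symm.trans hxs)
  refine ⟨{ toFun x := r x • u (n x), map_add' x y := ?_, map_smul' c x := ?_ },
    fun s m ↦ hspec _ s m rfl⟩
  · have hsum : x + y = (r x * ϖ ^ n y + r y * ϖ ^ n x) • invSelf ϖ ^ (n x + n y) := by
      rw [add_smul, ← smul_eq_mul_pow_smul_add hS, add_comm (n x),
        ← smul_eq_mul_pow_smul_add hS, ← hx, ← hx]
    rw [hspec _ _ _ hsum, add_smul, ← smul_eq_mul_pow_smul_add hu, add_comm (n x),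
      ← smul_eq_mul_pow_smul_add hu]
  · have hcx : c • x = (c * r x) • invSelf ϖ ^ n x := by rw [mul_smul, ← hx]
    simp only [hspec _ _ _ hcx, mul_smul, RingHom.id_apply]

variable {N : Type*} [AddCommGroup N] [Module R N] [IsAdicComplete (Ideal.span {ϖ}) N]

theorem exists_compatible_lift (f : N →ₗ[R] M) (g : M →ₗ[R] S) (hg : Function.Surjective g)
    (hexact : LinearMap.range f = LinearMap.ker g) :
    ∃ u : ℕ → M, (∀ n, ϖ • u (n + 1) = u n) ∧ ∀ n, g (u n) = invSelf ϖ ^ n := by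
  choose m hm using fun n ↦ hg (invSelf ϖ ^ n)
  have hdefect (n : ℕ) : ∃ a, f a = ϖ • m (n + 1) - m n := by
    rw [← LinearMap.mem_range, hexact, LinearMap.mem_ker, map_sub, map_smul, hm, hm,
      smul_invSelf_pow_succ, sub_self]
  choose a ha using hdefect
  obtain ⟨b, hb⟩ := exists_eq_add_smul_succ ϖ a
  have hgf (x : N) : g (f x) = 0 := by
    rw [← LinearMap.mem_ker, ← hexact]
    exact LinearMap.mem_range_self f x
  refine ⟨fun n ↦ m n + f (b n), fun n ↦ ?_, fun n ↦ by rw [map_add, hm, hgf, add_zero]⟩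
  change ϖ • (m (n + 1) + f (b (n + 1))) = m n + f (b n)
  rw [smul_add, ← map_smul, hb n, map_add, ha]
  abel

end IsLocalization.Away

theorem IsLocalization.Away.exists_comp_eq_id_of_exact {R S M N : Type*} [CommRing R]
    [CommRing S] [Algebra R S] [AddCommGroup M] [Module R M] [AddCommGroup N] [Module R N]
    (ϖ : R) [IsLocalization.Away ϖ S] [IsAdicComplete (Ideal.span {ϖ}) N]
    (f : N →ₗ[R] M) (g : M →ₗ[R] S) (hg : Function.Surjective g)
    (hexact : LinearMap.range f = LinearMap.ker g) :
    ∃ h : S →ₗ[R] M, g ∘ₗ h = LinearMap.id := by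
  obtain ⟨u, hu, hgu⟩ := exists_compatible_lift ϖ f g hg hexact
  obtain ⟨h, hh⟩ := exists_linearMap_smul_invSelf_pow (S := S) ϖ hu
  refine ⟨h, LinearMap.ext fun x ↦ ?_⟩
  obtain ⟨r, n, rfl⟩ := exists_eq_smul_invSelf_pow (S := S) ϖ x
  rw [LinearMap.comp_apply, hh, map_smul, hgu, LinearMap.id_apply]

theorem IsDiscreteValuationRing.isLocalization_away_of_irreducible {R : Type*} [CommRing R]
    [IsDomain R] [IsDiscreteValuationRing R] {ϖ : R} (hϖ : Irreducible ϖ) (K : Type*)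
    [CommRing K] [Algebra R K] [IsFractionRing R K] : IsLocalization.Away ϖ K := by
  refine (IsLocalization.iff_of_le_of_exists_dvd _ _
    (powers_le_nonZeroDivisors_of_noZeroDivisors hϖ.ne_zero) fun q hq ↦ ?_).mpr ‹_›
  obtain ⟨n, v, rfl⟩ := eq_unit_mul_pow_irreducible (nonZeroDivisors.ne_zero hq) hϖ
  exact ⟨ϖ ^ n, pow_mem (Submonoid.mem_powers ϖ) n, Units.mul_left_dvd.mpr dvd_rfl⟩

theorem stmt_3_general (R K : Type*) [CommRing R] [IsDomain R] [IsDiscreteValuationRing R]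
    [IsAdicComplete (IsLocalRing.maximalIdeal R) R]
    [Field K] [Algebra R K] [IsFractionRing R K]
    (M : Type*) [AddCommGroup M] [Module R M]
    (f : R →ₗ[R] M) (g : M →ₗ[R] K)
    (hg : Function.Surjective g)
    (hexact : LinearMap.range f = LinearMap.ker g) :
    ∃ h : K →ₗ[R] M, g ∘ₗ h = LinearMap.id := by
  obtain ⟨ϖ, hϖ⟩ := IsDiscreteValuationRing.exists_irreducible R
  have : IsAdicComplete (Ideal.span {ϖ}) R := hϖ.maximalIdeal_eq ▸ ‹_›
  have := IsDiscreteValuationRing.isLocalization_away_of_irreducible hϖ K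
  exact IsLocalization.Away.exists_comp_eq_id_of_exact ϖ f g hg hexact

/-- Over a complete DVR `R` with fraction field `K`, we have
`Ext¹_R(K, R) = 0`: every short exact sequence of `R`-modules
`0 → R → M → K → 0` splits. -/
theorem stmt_3 (R K : Type*) [CommRing R] [IsDomain R] [IsDiscreteValuationRing R]
    [IsAdicComplete (IsLocalRing.maximalIdeal R) R]
    [Field K] [Algebra R K] [IsFractionRing R K]
    (M : Type*) [AddCommGroup M] [Module R M]
    (f : R →ₗ[R] M) (g : M →ₗ[R] K)
    (hf : Function.Injective f) (hg : Function.Surjective g)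
    (hexact : LinearMap.range f = LinearMap.ker g) :
    ∃ h : K →ₗ[R] M, g ∘ₗ h = LinearMap.id :=
  stmt_3_general R K M f g hg hexact
end

section
/- Let R be a complete discrete valuation ring with fraction field K. Then the natural R-module homomorphism Hom_R(K, K) → Hom_R(K, K/R), given by composing with the quotient map K → K/R, is bijective. -/
/-!
Every element of `K` is `r / ϖⁿ`, so an `R`-linear map out of `K` is determined by its values at
the `ϖ⁻ⁿ`. Injectivity: if `φ : K → K` takes values in `R`, then `φ x = ϖⁿ φ (x / ϖⁿ) ∈ ϖⁿ R` for
all `n`, so `φ x = 0` because `R` is `ϖ`-adically separated. Surjectivity: for `f : K → K/R` choose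
lifts `bₙ` of `f (ϖ⁻ⁿ)`; then `ϖⁿ⁺¹ bₙ₊₁ - ϖⁿ bₙ ∈ ϖⁿ R`, so by completeness the `ϖⁿ bₙ` converge,
modulo `R`, to some `c ∈ K` with `c ϖ⁻ⁿ ≡ bₙ` mod `R`, and `f` is induced by multiplication by `c`.
-/

theorem IsPrecomplete.exists_smodEq_of_smodEq_succ {R M : Type*} [CommRing R] [AddCommGroup M]
    [Module R M] {I : Ideal R} [IsPrecomplete I M] {f : ℕ → M}
    (hf : ∀ n, f n ≡ f (n + 1) [SMOD (I ^ n • ⊤ : Submodule R M)]) :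
    ∃ L : M, ∀ n, f n ≡ L [SMOD (I ^ n • ⊤ : Submodule R M)] := by
  refine IsPrecomplete.prec ‹_› fun {m} n hmn => ?_
  induction n, hmn using Nat.le_induction with
  | base => rfl
  | succ n hmn ih => exact ih.trans ((hf n).mono (Submodule.pow_smul_top_le I M hmn))

theorem LinearMap.eq_zero_of_forall_mem_range_algebraMap {R K : Type*} [CommRing R] [Field K]
    [Algebra R K] [FaithfulSMul R K] {I : Ideal R} [IsHausdorff I R] {a : R} (haI : a ∈ I)
    (ha : a ≠ 0) {φ : K →ₗ[R] K} (hφ : ∀ x, φ x ∈ LinearMap.range (Algebra.linearMap R K)) :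
    φ = 0 := by
  have hinj := FaithfulSMul.algebraMap_injective R K
  have ha' : algebraMap R K a ≠ 0 := (map_ne_zero_iff _ hinj).mpr ha
  ext x
  obtain ⟨e, he⟩ := hφ x
  suffices e = 0 by simp [← he, this]
  refine IsHausdorff.haus ‹_› e fun n => SModEq.zero.mpr ?_
  obtain ⟨d, hd⟩ := hφ ((algebraMap R K a)⁻¹ ^ n * x)
  have hx : x = a ^ n • ((algebraMap R K a)⁻¹ ^ n * x) := by
    rw [Algebra.smul_def, map_pow, ← mul_assoc, ← mul_pow, mul_inv_cancel₀ ha', one_pow, one_mul]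
  have hed : e = a ^ n * d := hinj <| by
    rw [← Algebra.linearMap_apply, he, hx, map_smul, ← hd, Algebra.linearMap_apply,
      Algebra.smul_def, map_mul]
  rw [hed, Ideal.smul_eq_mul, Ideal.mul_top]
  exact Ideal.mul_mem_right _ _ (Ideal.pow_mem_pow haI n)

namespace IsDiscreteValuationRing

variable {R K : Type*} [CommRing R] [IsDomain R] [IsDiscreteValuationRing R] [Field K]
  [Algebra R K] [IsFractionRing R K] {ϖ : R}

theorem smodEq_maximalIdeal_pow_iff (hϖ : Irreducible ϖ) {x y : R} {n : ℕ} :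
    x ≡ y [SMOD (IsLocalRing.maximalIdeal R ^ n • ⊤ : Submodule R R)] ↔ ϖ ^ n ∣ x - y := by
  rw [SModEq.sub_mem, Ideal.smul_eq_mul, Ideal.mul_top, hϖ.maximalIdeal_eq,
    Ideal.span_singleton_pow, Ideal.mem_span_singleton]

theorem exists_eq_smul_inv_pow (hϖ : Irreducible ϖ) (x : K) :
    ∃ (r : R) (n : ℕ), x = r • (algebraMap R K ϖ)⁻¹ ^ n := by
  obtain ⟨a, b, hb, rfl⟩ := IsFractionRing.div_surjective (A := R) x
  obtain ⟨n, u, rfl⟩ := eq_unit_mul_pow_irreducible (nonZeroDivisors.ne_zero hb) hϖ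
  refine ⟨↑u⁻¹ * a, n, ?_⟩
  simp only [Algebra.smul_def, map_mul, map_pow, map_units_inv, inv_pow]
  ring

theorem linearMap_ext_inv_pow (hϖ : Irreducible ϖ) {M : Type*} [AddCommGroup M] [Module R M]
    {f g : K →ₗ[R] M} (h : ∀ n : ℕ, f ((algebraMap R K ϖ)⁻¹ ^ n) = g ((algebraMap R K ϖ)⁻¹ ^ n)) :
    f = g := by
  ext x
  obtain ⟨r, n, rfl⟩ := exists_eq_smul_inv_pow hϖ x
  rw [map_smul, map_smul, h]

theorem exists_mul_inv_pow_sub_mem_range [IsPrecomplete (IsLocalRing.maximalIdeal R) R]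
    (hϖ : Irreducible ϖ) {b : ℕ → K}
    (hb : ∀ n, algebraMap R K ϖ * b (n + 1) - b n ∈ LinearMap.range (Algebra.linearMap R K)) :
    ∃ c : K, ∀ n, c * (algebraMap R K ϖ)⁻¹ ^ n - b n ∈ LinearMap.range (Algebra.linearMap R K) := by
  choose s hs using hb
  simp only [Algebra.linearMap_apply] at hs
  set r : ℕ → R := fun n => ∑ k ∈ Finset.range n, ϖ ^ k * s k
  have hr : ∀ n, algebraMap R K (r n) = algebraMap R K ϖ ^ n * b n - b 0 := by
    intro n
    induction n with
    | zero => simp [r]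
    | succ n ih =>
      rw [show r (n + 1) = r n + ϖ ^ n * s n from Finset.sum_range_succ _ n, map_add, ih,
        map_mul, map_pow, hs]
      ring
  obtain ⟨L, hL⟩ := IsPrecomplete.exists_smodEq_of_smodEq_succ (f := r) fun n =>
    (smodEq_maximalIdeal_pow_iff hϖ).mpr ⟨-s n, by simp [r, Finset.sum_range_succ]⟩
  refine ⟨b 0 + algebraMap R K L, fun n => ?_⟩
  obtain ⟨e, he⟩ := (smodEq_maximalIdeal_pow_iff hϖ).mp (hL n)
  refine ⟨-e, ?_⟩
  rw [show L = r n - ϖ ^ n * e by rw [← he]; ring, Algebra.linearMap_apply, map_sub, hr, map_mul,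
    map_pow, map_neg]
  have hϖn : algebraMap R K ϖ ^ n * (algebraMap R K ϖ)⁻¹ ^ n = 1 := by
    rw [← mul_pow, mul_inv_cancel₀ (by simpa using hϖ.ne_zero), one_pow]
  linear_combination (algebraMap R K e - b n) * hϖn

theorem mkQ_comp_surjective [IsPrecomplete (IsLocalRing.maximalIdeal R) R] :
    Function.Surjective fun φ : K →ₗ[R] K =>
      (LinearMap.range (Algebra.linearMap R K)).mkQ ∘ₗ φ := by
  obtain ⟨ϖ, hϖ⟩ := exists_irreducible R
  set w := algebraMap R K ϖ
  have hw : w ≠ 0 := by simpa [w] using hϖ.ne_zero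
  intro f
  choose b hb using fun n : ℕ => Submodule.Quotient.mk_surjective _ (f (w⁻¹ ^ n))
  obtain ⟨c, hc⟩ := exists_mul_inv_pow_sub_mem_range hϖ (b := b) fun n => by
    have hpow : ϖ • w⁻¹ ^ (n + 1) = w⁻¹ ^ n := by
      rw [Algebra.smul_def, pow_succ, mul_comm, mul_assoc, inv_mul_cancel₀ hw, mul_one]
    rw [← Submodule.Quotient.mk_eq_zero, Submodule.Quotient.mk_sub, ← Algebra.smul_def]
    rw [Submodule.Quotient.mk_smul, hb, hb, ← map_smul, hpow, sub_self]
  refine ⟨LinearMap.mulLeft R c, linearMap_ext_inv_pow hϖ fun n => ?_⟩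
  rw [LinearMap.comp_apply, LinearMap.mulLeft_apply, ← hb, Submodule.mkQ_apply,
    Submodule.Quotient.eq]
  exact hc n

theorem mkQ_comp_injective [IsHausdorff (IsLocalRing.maximalIdeal R) R] :
    Function.Injective fun φ : K →ₗ[R] K =>
      (LinearMap.range (Algebra.linearMap R K)).mkQ ∘ₗ φ := by
  intro φ ψ h
  obtain ⟨ϖ, hϖ⟩ := exists_irreducible R
  rw [← sub_eq_zero]
  refine LinearMap.eq_zero_of_forall_mem_range_algebraMap
    (hϖ.maximalIdeal_eq ▸ Ideal.mem_span_singleton_self ϖ) hϖ.ne_zero fun x => ?_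
  rw [← Submodule.Quotient.mk_eq_zero, LinearMap.sub_apply, Submodule.Quotient.mk_sub,
    sub_eq_zero]
  exact LinearMap.congr_fun h x

end IsDiscreteValuationRing

/-- Over a complete DVR `R` with fraction field `K`, the natural map
`Hom_R(K, K) → Hom_R(K, K/R)`, given by composing with the quotient map
`K → K/R`, is bijective. -/
theorem stmt_4 (R K : Type*) [CommRing R] [IsDomain R] [IsDiscreteValuationRing R]
    [IsAdicComplete (IsLocalRing.maximalIdeal R) R]
    [Field K] [Algebra R K] [IsFractionRing R K] :
    Function.Bijective (fun φ : K →ₗ[R] K =>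
      (Submodule.mkQ (LinearMap.range (Algebra.linearMap R K))) ∘ₗ φ) :=
  ⟨IsDiscreteValuationRing.mkQ_comp_injective, IsDiscreteValuationRing.mkQ_comp_surjective⟩
end

section
/- Let R be a discrete valuation ring with uniformizer π and fraction field K, let A and B be R-algebras that are torsion-free as R-modules, let I be an ideal of A, and let n be a positive integer. Set A_n := A + Σ_{k ≥ 1} π^{-kn} I^k, an R-subalgebra of A_K := K ⊗_R A. For an R-algebra homomorphism φ : A → B with K-linear extension φ_K : A_K → B_K, the image φ_K(A_n) is contained in B (viewed inside B_K := K ⊗_R B) if and only if φ(I) ⊆ π^n B. -/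
/-!
Since `π^{-kn} I^k` is spanned over `R` by the elements `π^{-kn} ⊗ a` with `a ∈ I^k`, and
`φ_K (π^{-m} ⊗ a) = π^{-m} ⊗ φ a`, everything reduces to: for `B` torsion-free, `π^{-m} ⊗ b` lies
in `B ⊆ B_K` iff `π^m ∣ b`. The case `k = 1` gives one direction; for the other,
`φ(I) ⊆ π^n B` implies `φ(I^k) ⊆ π^{kn} B`.
-/

open TensorProduct

section
variable {R : Type*} (K : Type*) {M : Type*} [CommRing R] [IsDomain R] [Field K] [Algebra R K]
  [IsFractionRing R K] [AddCommGroup M] [Module R M] [NoZeroSMulDivisors R M]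

theorem TensorProduct.mk_one_injective_of_isFractionRing_s6 :
    Function.Injective (TensorProduct.mk R K M 1) := by
  have : IsLocalizedModule (nonZeroDivisors R) (TensorProduct.mk R K M 1) :=
    (isLocalizedModule_iff_isBaseChange (nonZeroDivisors R) K _).mpr
      (TensorProduct.isBaseChange R M K)
  exact (IsLocalizedModule.injective_iff_isRegular (nonZeroDivisors R) _).mpr fun c ↦
    smul_right_injective M (nonZeroDivisors.coe_ne_zero c)

theorem inv_tmul_mem_range_mk_one_iff {r : R} (hr : r ≠ 0) (m : M) :
    (algebraMap R K r)⁻¹ ⊗ₜ[R] m ∈ Set.range (TensorProduct.mk R K M 1) ↔ ∃ m', m = r • m' := by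
  have hrK : algebraMap R K r ≠ 0 := (map_ne_zero_iff _ (IsFractionRing.injective R K)).mpr hr
  constructor
  · rintro ⟨m', hm'⟩
    refine ⟨m', TensorProduct.mk_one_injective_of_isFractionRing_s6 (R := R) K ?_⟩
    simp only [mk_apply] at hm' ⊢
    rw [tmul_smul, hm', smul_tmul', Algebra.smul_def, mul_inv_cancel₀ hrK]
  · rintro ⟨m', rfl⟩
    refine ⟨m', ?_⟩
    rw [mk_apply, ← smul_tmul, Algebra.smul_def, mul_inv_cancel₀ hrK]
end

theorem Ideal.pow_dvd_map_of_mem_pow {A B : Type*} [CommSemiring A] [CommSemiring B]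
    (f : A →+* B) {I : Ideal A} {d : B} (h : ∀ a ∈ I, d ∣ f a) (k : ℕ) {a : A}
    (ha : a ∈ I ^ k) : d ^ k ∣ f a := by
  have hI : I.map f ≤ Ideal.span {d} :=
    Ideal.map_le_iff_le_comap.mpr fun a ha ↦ Ideal.mem_span_singleton.mpr (h a ha)
  rw [← Ideal.mem_span_singleton, ← Ideal.span_singleton_pow]
  exact Ideal.pow_right_mono hI k (Ideal.map_pow f I k ▸ Ideal.mem_map_of_mem f ha)

theorem stmt_6_general (R K A B : Type*) [CommRing R] [IsDomain R]
    [Field K] [Algebra R K] [IsFractionRing R K]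
    [CommRing A] [Algebra R A]
    [CommRing B] [Algebra R B] [NoZeroSMulDivisors R B]
    (π : R) (hπ : Irreducible π) (I : Ideal A) (n : ℕ)
    (φ : A →ₐ[R] B) :
    (∀ x : K ⊗[R] A,
        x ∈ LinearMap.range
            (Algebra.TensorProduct.includeRight : A →ₐ[R] K ⊗[R] A).toLinearMap
          ⊔ ⨆ k : ℕ, Submodule.map
              ((LinearMap.lsmul K (K ⊗[R] A)
                  ((algebraMap R K π)⁻¹ ^ ((k + 1) * n))).restrictScalars R)
              (Submodule.map
                (Algebra.TensorProduct.includeRight : A →ₐ[R] K ⊗[R] A).toLinearMap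
                ((I ^ (k + 1)).restrictScalars R)) →
        Algebra.TensorProduct.map (AlgHom.id R K) φ x ∈
          Set.range (Algebra.TensorProduct.includeRight : B →ₐ[R] K ⊗[R] B))
    ↔ ∀ a ∈ I, ∃ b : B, φ a = (algebraMap R B π) ^ n * b := by
  have image_mem_iff_dvd (m : ℕ) (a : A) :
      Algebra.TensorProduct.map (AlgHom.id R K) φ ((algebraMap R K π)⁻¹ ^ m • (1 ⊗ₜ a)) ∈
          Set.range (Algebra.TensorProduct.includeRight : B →ₐ[R] K ⊗[R] B) ↔
        ∃ b : B, φ a = algebraMap R B π ^ m * b := by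
    rw [inv_pow, ← map_pow, smul_tmul', smul_eq_mul, mul_one, Algebra.TensorProduct.map_tmul]
    simpa [Algebra.smul_def] using
      inv_tmul_mem_range_mk_one_iff K (pow_ne_zero m hπ.ne_zero) (φ a)
  constructor
  · intro h a ha
    simpa using (image_mem_iff_dvd _ a).1 <| h _ <| Submodule.mem_sup_right <|
      Submodule.mem_iSup_of_mem 0 ⟨_, ⟨a, by simpa using ha, rfl⟩, rfl⟩
  · intro h x hx
    refine (show _ ≤ Submodule.comap (Algebra.TensorProduct.map (AlgHom.id R K) φ).toLinearMap
      (LinearMap.range (Algebra.TensorProduct.includeRight : B →ₐ[R] K ⊗[R] B).toLinearMap)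
      from sup_le ?_ (iSup_le fun k ↦ ?_)) hx
    · rintro _ ⟨a, rfl⟩
      exact ⟨φ a, by simp⟩
    · rintro _ ⟨_, ⟨a, ha, rfl⟩, rfl⟩
      refine (image_mem_iff_dvd _ a).2 ?_
      rw [mul_comm, pow_mul]
      exact Ideal.pow_dvd_map_of_mem_pow φ.toRingHom h _ ha

/-- With `A_n = A + Σ_{k ≥ 1} π^{-kn} I^k ⊆ A_K` and `φ : A → B` an
`R`-algebra homomorphism, the extension `φ_K : A_K → B_K` maps `A_n` into `B`
if and only if `φ(I) ⊆ π^n B`. -/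
theorem stmt_6 (R K A B : Type*) [CommRing R] [IsDomain R] [IsDiscreteValuationRing R]
    [Field K] [Algebra R K] [IsFractionRing R K]
    [CommRing A] [Algebra R A] [NoZeroSMulDivisors R A]
    [CommRing B] [Algebra R B] [NoZeroSMulDivisors R B]
    (π : R) (hπ : Irreducible π) (I : Ideal A) (n : ℕ) (hn : 0 < n)
    (φ : A →ₐ[R] B) :
    (∀ x : K ⊗[R] A,
        x ∈ LinearMap.range
            (Algebra.TensorProduct.includeRight : A →ₐ[R] K ⊗[R] A).toLinearMap
          ⊔ ⨆ k : ℕ, Submodule.map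
              ((LinearMap.lsmul K (K ⊗[R] A)
                  ((algebraMap R K π)⁻¹ ^ ((k + 1) * n))).restrictScalars R)
              (Submodule.map
                (Algebra.TensorProduct.includeRight : A →ₐ[R] K ⊗[R] A).toLinearMap
                ((I ^ (k + 1)).restrictScalars R)) →
        Algebra.TensorProduct.map (AlgHom.id R K) φ x ∈
          Set.range (Algebra.TensorProduct.includeRight : B →ₐ[R] K ⊗[R] B))
    ↔ ∀ a ∈ I, ∃ b : B, φ a = (algebraMap R B π) ^ n * b :=
  stmt_6_general R K A B π hπ I n φ
end

section
/- Let R be a discrete valuation ring with uniformizer π, fraction field K and residue field κ, let A be an R-algebra that is torsion-free as an R-module, and let I be an ideal of A such that A/I is torsion-free as an R-module. Let A_∞ := A + K·I be the R-submodule of A_K := K ⊗_R A generated by A together with all elements π^{-m} a for m ≥ 0 and a ∈ I. Then A_∞ is an R-subalgebra of A_K, and the κ-algebra A_∞ / π A_∞ is isomorphic to A / (I + πA). -/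
/-!
Write `ι : A → K ⊗[R] A` and `J` for the ideal of `K ⊗[R] A` generated by `ι(I)`; its elements are
the `K`-linear combinations of `ι(I)`, so `A_∞ = ι(A) + J`, and a subalgebra plus an ideal is
again a subalgebra. As `π` is a unit in `K`, every element of `J` is `π` times an element of
`J ⊆ A_∞`; hence `A → A_∞ / π A_∞` is onto, with kernel `ι⁻¹(J) + πA`. Finally `ι⁻¹(J) = I`:
an element of `J` is `ι(c)/s` with `c ∈ I` and `s ≠ 0`, so `ι(a) ∈ J` gives `s • a = c` by
torsion-freeness of `A`, and then `a ∈ I` by torsion-freeness of `A ⧸ I`.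
-/

open TensorProduct Algebra.TensorProduct

section SupIdeal

variable {R B : Type*} [CommSemiring R] [CommSemiring B] [Algebra R B]

theorem Subalgebra.mul_mem_sup_ideal (S : Subalgebra R B) (J : Ideal B) {x y : B}
    (hx : x ∈ toSubmodule S ⊔ J.restrictScalars R)
    (hy : y ∈ toSubmodule S ⊔ J.restrictScalars R) :
    x * y ∈ toSubmodule S ⊔ J.restrictScalars R := by
  obtain ⟨s, hs, j, hj, rfl⟩ := Submodule.mem_sup.mp hx
  obtain ⟨t, ht, k, hk, rfl⟩ := Submodule.mem_sup.mp hy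
  have hexpand : (s + j) * (t + k) = s * t + (s * k + j * (t + k)) := by ring
  rw [hexpand]
  exact Submodule.add_mem_sup (S.mul_mem hs ht)
    (J.add_mem (J.mul_mem_left s hk) (J.mul_mem_right _ hj))

def Subalgebra.supIdeal (S : Subalgebra R B) (J : Ideal B) : Subalgebra R B :=
  (toSubmodule S ⊔ J.restrictScalars R).toSubalgebra (Submodule.mem_sup_left S.one_mem)
    fun _ _ ↦ S.mul_mem_sup_ideal J

theorem Subalgebra.toSubmodule_supIdeal (S : Subalgebra R B) (J : Ideal B) :
    toSubmodule (S.supIdeal J) = toSubmodule S ⊔ J.restrictScalars R :=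
  Submodule.toSubalgebra_toSubmodule _ _ _

end SupIdeal

section QuotientSupIdeal

variable {R A B : Type*} [CommRing R] [CommRing A] [CommRing B] [Algebra R A] [Algebra R B]
  (f : A →ₐ[R] B) (J : Ideal B) {π : R}

namespace AlgHom

theorem mem_span_algebraMap_of_mem_ideal (hπ : IsUnit (algebraMap R B π))
    {x : f.range.supIdeal J} (hx : (x : B) ∈ J) :
    x ∈ Ideal.span {algebraMap R (f.range.supIdeal J) π} := by
  obtain ⟨u, hu⟩ := hπ
  have hy : ((u⁻¹ : Bˣ) : B) * x ∈ f.range.supIdeal J :=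
    Submodule.mem_sup_right (J.mul_mem_left _ hx)
  refine Ideal.mem_span_singleton'.mpr ⟨⟨_, hy⟩, Subtype.ext ?_⟩
  change _ * _ * algebraMap R B π = (x : B)
  rw [← hu, mul_comm, ← mul_assoc, Units.mul_inv, one_mul]

noncomputable def toQuotientSupIdeal (π : R) :
    A →ₐ[R] f.range.supIdeal J ⧸ Ideal.span {algebraMap R (f.range.supIdeal J) π} :=
  (Ideal.Quotient.mkₐ R _).comp (f.codRestrict _ fun a ↦ Submodule.mem_sup_left ⟨a, rfl⟩)

theorem toQuotientSupIdeal_surjective (hπ : IsUnit (algebraMap R B π)) :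
    Function.Surjective (f.toQuotientSupIdeal J π) := by
  intro z
  obtain ⟨x, rfl⟩ := Ideal.Quotient.mk_surjective z
  obtain ⟨_, ⟨a, rfl⟩, w, hw, hx⟩ := Submodule.mem_sup.mp x.2
  refine ⟨a, (Ideal.Quotient.mk_eq_mk_iff_sub_mem _ _).mpr
    (f.mem_span_algebraMap_of_mem_ideal J hπ ?_)⟩
  have hx_eq : (x : B) = f a + w := hx.symm
  change f a - (x : B) ∈ J
  rw [hx_eq, sub_add_cancel_left]
  exact J.neg_mem hw

theorem ker_toQuotientSupIdeal (hπ : IsUnit (algebraMap R B π)) :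
    RingHom.ker (f.toQuotientSupIdeal J π) = J.comap f ⊔ Ideal.span {algebraMap R A π} := by
  apply le_antisymm
  · intro a ha
    obtain ⟨t, ht⟩ := Ideal.mem_span_singleton'.mp (Ideal.Quotient.eq_zero_iff_mem.mp ha)
    obtain ⟨_, ⟨b, rfl⟩, w, hw, htbw⟩ := Submodule.mem_sup.mp t.2
    have ht_eq : (t : B) = f b + w := htbw.symm
    have hfa : f a = (f b + w) * algebraMap R B π := by
      rw [← ht_eq]; exact congrArg Subtype.val ht.symm
    have hdiff : a - b * algebraMap R A π ∈ J.comap f := by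
      rw [Ideal.mem_comap, map_sub, map_mul, f.commutes, hfa, add_mul, add_sub_cancel_left]
      exact J.mul_mem_right _ hw
    rw [← sub_add_cancel a (b * algebraMap R A π)]
    exact Submodule.add_mem_sup hdiff (Ideal.mul_mem_left _ _ (Ideal.mem_span_singleton_self _))
  · refine sup_le (fun c hc ↦ ?_) ?_
    · have hfc : f c ∈ f.range.supIdeal J := Submodule.mem_sup_left ⟨c, rfl⟩
      exact Ideal.Quotient.eq_zero_iff_mem.mpr
        (f.mem_span_algebraMap_of_mem_ideal J hπ (x := ⟨f c, hfc⟩) hc)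
    · rw [Ideal.span_le, Set.singleton_subset_iff, SetLike.mem_coe, RingHom.mem_ker,
        AlgHom.commutes]
      exact Ideal.Quotient.eq_zero_iff_mem.mpr (Ideal.mem_span_singleton_self _)

noncomputable def quotientSupIdealEquiv (hπ : IsUnit (algebraMap R B π)) :
    (f.range.supIdeal J ⧸ Ideal.span {algebraMap R (f.range.supIdeal J) π}) ≃ₐ[R]
      A ⧸ (J.comap f ⊔ Ideal.span {algebraMap R A π}) :=
  (Ideal.quotientKerAlgEquivOfSurjective (f.toQuotientSupIdeal_surjective J hπ)).symm.trans
    (Ideal.quotientEquivAlgOfEq R (f.ker_toQuotientSupIdeal J hπ))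

end AlgHom

end QuotientSupIdeal

section BaseChange

variable {R K A : Type*} [CommRing R] [CommRing K] [Algebra R K] [CommRing A] [Algebra R A]

theorem span_range_includeRight :
    Submodule.span K (Set.range (includeRight : A →ₐ[R] K ⊗[R] A)) = ⊤ := by
  refine Submodule.restrictScalars_injective R _ _ (eq_top_iff.mpr ?_)
  rw [← TensorProduct.span_tmul_eq_top, Submodule.span_le]
  rintro _ ⟨k, a, rfl⟩
  rw [← mul_one k, ← smul_eq_mul, ← TensorProduct.smul_tmul']
  exact Submodule.smul_mem _ k (Submodule.subset_span ⟨a, rfl⟩)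

theorem restrictScalars_map_includeRight (I : Ideal A) :
    (I.map (includeRight : A →ₐ[R] K ⊗[R] A)).restrictScalars K =
      Submodule.span K (includeRight '' (I : Set A)) := by
  refine le_antisymm ?_ (Submodule.span_le_restrictScalars K _ _)
  rw [Ideal.map, Ideal.span, ← Submodule.span_smul_of_span_eq_top span_range_includeRight]
  refine Submodule.span_mono ?_
  rintro _ ⟨_, ⟨a, rfl⟩, _, ⟨c, hc, rfl⟩, rfl⟩
  exact ⟨a * c, I.mul_mem_left a hc, map_mul _ _ _⟩

variable [IsFractionRing R K]

theorem includeRight_injective_of_isTorsionFree [Module.IsTorsionFree R A] :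
    Function.Injective (includeRight : A →ₐ[R] K ⊗[R] A) :=
  (IsLocalizedModule.injective_iff_isRegular (nonZeroDivisors R) (TensorProduct.mk R K A 1)).mpr
    fun c ↦ (isRegular_iff_mem_nonZeroDivisors.mpr c.2).isSMulRegular

theorem comap_map_includeRight [Module.IsTorsionFree R A] (I : Ideal A)
    [Module.IsTorsionFree R (A ⧸ I)] :
    (I.map (includeRight : A →ₐ[R] K ⊗[R] A)).comap includeRight = I := by
  refine le_antisymm (fun a ha ↦ ?_) Ideal.le_comap_map
  have hmem : includeRight a ∈ Submodule.localized' K (nonZeroDivisors R)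
      (TensorProduct.mk R K A 1) (I.restrictScalars R) := by
    rw [Submodule.localized'_eq_span]
    change includeRight a ∈ Submodule.span K (includeRight '' (I : Set A))
    rw [← restrictScalars_map_includeRight]
    exact ha
  obtain ⟨c, hc, s, hcs⟩ := hmem
  have hsa : (s : R) • a = c := includeRight_injective_of_isTorsionFree (K := K)
    (by rw [map_smul]; exact ((IsLocalizedModule.mk'_eq_iff.mp hcs).symm))
  have hsa_mk : (s : R) • Ideal.Quotient.mk I a = 0 := by
    rw [← Ideal.Quotient.mkₐ_eq_mk R, ← map_smul, hsa]
    exact Ideal.Quotient.eq_zero_iff_mem.mpr hc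
  exact Ideal.Quotient.eq_zero_iff_mem.mp
    ((isRegular_iff_mem_nonZeroDivisors.mpr s.2).isSMulRegular.right_eq_zero_of_smul hsa_mk)

end BaseChange

theorem stmt_7_general (R K A : Type*) [CommRing R] [IsDomain R]
    [Field K] [Algebra R K] [IsFractionRing R K]
    [CommRing A] [Algebra R A] [NoZeroSMulDivisors R A]
    (π : R) (hπ : Irreducible π) (I : Ideal A)
    [NoZeroSMulDivisors R (A ⧸ I)] :
    ∃ S : Subalgebra R (K ⊗[R] A),
      Subalgebra.toSubmodule S =
        LinearMap.range
          (Algebra.TensorProduct.includeRight : A →ₐ[R] K ⊗[R] A).toLinearMap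
        ⊔ (Submodule.span K
            ((Algebra.TensorProduct.includeRight : A →ₐ[R] K ⊗[R] A) ''
              (I : Set A))).restrictScalars R
      ∧ Nonempty
          ((S ⧸ Ideal.span {algebraMap R S π}) ≃ₐ[R]
            (A ⧸ (I ⊔ Ideal.span {algebraMap R A π}))) := by
  set ι := (includeRight : A →ₐ[R] K ⊗[R] A)
  have hπ_unit : IsUnit (algebraMap R (K ⊗[R] A) π) := by
    rw [IsScalarTower.algebraMap_apply R K]
    exact (isUnit_iff_ne_zero.mpr (IsFractionRing.to_map_ne_zero_of_mem_nonZeroDivisors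
      (mem_nonZeroDivisors_of_ne_zero hπ.ne_zero))).map _
  refine ⟨ι.range.supIdeal (I.map ι), ?_, ⟨(ι.quotientSupIdealEquiv _ hπ_unit).trans
    (Ideal.quotientEquivAlgOfEq R (by rw [comap_map_includeRight]))⟩⟩
  rw [Subalgebra.toSubmodule_supIdeal, ← restrictScalars_map_includeRight,
    Submodule.restrictScalars_restrictScalars]
  rfl

/-- If `A/I` is `R`-torsion-free, then `A_∞ = A + K·I ⊆ A_K` is an
`R`-subalgebra of `A_K`, and `A_∞ / π A_∞` is isomorphic to `A / (I + πA)`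
(as algebras over `R`, hence over the residue field `κ = R/π`). -/
theorem stmt_7 (R K A : Type*) [CommRing R] [IsDomain R] [IsDiscreteValuationRing R]
    [Field K] [Algebra R K] [IsFractionRing R K]
    [CommRing A] [Algebra R A] [NoZeroSMulDivisors R A]
    (π : R) (hπ : Irreducible π) (I : Ideal A)
    [NoZeroSMulDivisors R (A ⧸ I)] :
    ∃ S : Subalgebra R (K ⊗[R] A),
      Subalgebra.toSubmodule S =
        LinearMap.range
          (Algebra.TensorProduct.includeRight : A →ₐ[R] K ⊗[R] A).toLinearMap
        ⊔ (Submodule.span K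
            ((Algebra.TensorProduct.includeRight : A →ₐ[R] K ⊗[R] A) ''
              (I : Set A))).restrictScalars R
      ∧ Nonempty
          ((S ⧸ Ideal.span {algebraMap R S π}) ≃ₐ[R]
            (A ⧸ (I ⊔ Ideal.span {algebraMap R A π}))) :=
  stmt_7_general R K A π hπ I
end

section
/- Let R be a discrete valuation ring with uniformizer π, fraction field K, and finite residue field κ of cardinality q. Let A be an R-algebra that is torsion-free as an R-module, equipped with an R-algebra homomorphism ε : A → R (the counit), and let A₁ be the R-subalgebra of A_K := K ⊗_R A generated by A together with all elements f^q/π for f ∈ A with ε(f) ∈ πR. If h : A → R is an R-algebra homomorphism such that h(f) ∈ πR for every f ∈ A with ε(f) ∈ πR, then the K-linear extension h_K : A_K → K maps A₁ into R, and moreover h_K(f₁) ∈ πR for every f₁ ∈ A₁ such that ε_K(f₁) ∈ πR, where ε_K : A_K → K is the K-linear extension of ε. -/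
/-!
If `ε(f) ∈ πR` forces `h(f) ∈ πR`, then applying this to `f - ε(f)` gives `h ≡ ε (mod π)` on `A`.
The elements of `A_K` on which both `h_K` and `ε_K` take values in `R` that are congruent mod `π`
form an `R`-subalgebra. It contains `A`, and it contains each generator `f^q/π`: both `h(f)` and
`ε(f)` lie in `πR`, so both values lie in `π^(q-1)R ⊆ πR` since `q ≥ 2`. Hence it contains `A₁`,
and on `A₁` the value `h_K(f₁)` lies in `R` and lies in `πR` whenever `ε_K(f₁)` does.
-/

open TensorProduct

def congruentValuesSubalgebra {R K B : Type*} [CommRing R] [CommRing K] [Algebra R K] [Semiring B]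
    [Algebra R B] (H E : B →ₐ[R] K) (I : Ideal R) : Subalgebra R B where
  carrier := {x | ∃ r r' : R, H x = algebraMap R K r ∧ E x = algebraMap R K r' ∧ r ≡ r' [SMOD I]}
  mul_mem' := by
    rintro x y ⟨r, r', hHx, hEx, hx⟩ ⟨s, s', hHy, hEy, hy⟩
    exact ⟨r * s, r' * s', by simp [hHx, hHy], by simp [hEx, hEy], hx.mul hy⟩
  add_mem' := by
    rintro x y ⟨r, r', hHx, hEx, hx⟩ ⟨s, s', hHy, hEy, hy⟩
    exact ⟨r + s, r' + s', by simp [hHx, hHy], by simp [hEx, hEy], hx.add hy⟩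
  algebraMap_mem' r := ⟨r, r, H.commutes r, E.commutes r, .rfl⟩

theorem AlgHom.apply_smodEq_of_forall_mem {R A : Type*} [CommRing R] [Ring A] [Algebra R A]
    {ε h : A →ₐ[R] R} {I : Ideal R} (hI : ∀ f, ε f ∈ I → h f ∈ I) (a : A) :
    h a ≡ ε a [SMOD I] := by
  have hmem : ε (a - algebraMap R A (ε a)) ∈ I := by simp
  simpa [SModEq.sub_mem] using hI _ hmem

theorem productMap_ofId_comp_smul_includeRight {R K A : Type*} [CommRing R] [CommRing K]
    [Algebra R K] [CommRing A] [Algebra R A] (φ : A →ₐ[R] R) (c : K) (a : A) :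
    Algebra.TensorProduct.productMap (AlgHom.id R K) ((Algebra.ofId R K).comp φ)
        (c • Algebra.TensorProduct.includeRight a) = c * algebraMap R K (φ a) := by
  rw [Algebra.TensorProduct.includeRight_apply, smul_tmul', smul_eq_mul, mul_one,
    Algebra.TensorProduct.productMap_apply_tmul]
  rfl

theorem exists_inv_mul_algebraMap_pow_eq {R K : Type*} [CommRing R] [Field K] [Algebra R K]
    {π r : R} (hπ : algebraMap R K π ≠ 0) (hr : π ∣ r) {q : ℕ} (hq : 2 ≤ q) :
    ∃ s : R, (algebraMap R K π)⁻¹ * algebraMap R K (r ^ q) = algebraMap R K (π * s) := by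
  obtain ⟨t, rfl⟩ := hr
  obtain ⟨n, rfl⟩ := Nat.exists_eq_add_of_le' hq
  refine ⟨π ^ n * t ^ (n + 2), ?_⟩
  simp only [map_mul, map_pow]
  field_simp
  ring

theorem adjoin_le_congruentValuesSubalgebra {R K A : Type*} [CommRing R] [Field K] [Algebra R K]
    [CommRing A] [Algebra R A] {π : R} (hπ : algebraMap R K π ≠ 0) {q : ℕ} (hq : 2 ≤ q)
    {ε h : A →ₐ[R] R} (hh : ∀ f : A, ε f ∈ Ideal.span {π} → h f ∈ Ideal.span {π}) :
    Algebra.adjoin R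
        (Set.range (Algebra.TensorProduct.includeRight : A →ₐ[R] K ⊗[R] A) ∪
          {x : K ⊗[R] A | ∃ f : A, ε f ∈ Ideal.span {π} ∧
            x = (algebraMap R K π)⁻¹ • Algebra.TensorProduct.includeRight (f ^ q)})
      ≤ congruentValuesSubalgebra
          (Algebra.TensorProduct.productMap (AlgHom.id R K) ((Algebra.ofId R K).comp h))
          (Algebra.TensorProduct.productMap (AlgHom.id R K) ((Algebra.ofId R K).comp ε))
          (Ideal.span {π}) := by
  have hπmul (s : R) : π * s ≡ 0 [SMOD Ideal.span {π}] :=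
    SModEq.zero.mpr (Ideal.mul_mem_right s _ (Ideal.mem_span_singleton_self π))
  rw [Algebra.adjoin_le_iff]
  rintro _ (⟨a, rfl⟩ | ⟨f, hf, rfl⟩)
  · refine ⟨h a, ε a, ?_, ?_, AlgHom.apply_smodEq_of_forall_mem hh a⟩
    · simpa only [one_smul, one_mul] using productMap_ofId_comp_smul_includeRight h (1 : K) a
    · simpa only [one_smul, one_mul] using productMap_ofId_comp_smul_includeRight ε (1 : K) a
  · obtain ⟨s, hs⟩ :=
      exists_inv_mul_algebraMap_pow_eq hπ (Ideal.mem_span_singleton.mp (hh f hf)) hq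
    obtain ⟨s', hs'⟩ := exists_inv_mul_algebraMap_pow_eq hπ (Ideal.mem_span_singleton.mp hf) hq
    refine ⟨π * s, π * s', ?_, ?_, (hπmul s).trans (hπmul s').symm⟩
    · rw [productMap_ofId_comp_smul_includeRight, map_pow h, hs]
    · rw [productMap_ofId_comp_smul_includeRight, map_pow ε, hs']

theorem stmt_8_general (R K A : Type*) [CommRing R] [IsDomain R] [IsDiscreteValuationRing R]
    [Field K] [Algebra R K] [IsFractionRing R K]
    [CommRing A] [Algebra R A]
    (π : R) (hπ : Irreducible π)
    (q : ℕ) [Finite (IsLocalRing.ResidueField R)]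
    (hq : Nat.card (IsLocalRing.ResidueField R) = q)
    (ε h : A →ₐ[R] R)
    (hh : ∀ f : A, ε f ∈ Ideal.span {π} → h f ∈ Ideal.span {π}) :
    (∀ x ∈ Algebra.adjoin R
        (Set.range (Algebra.TensorProduct.includeRight : A →ₐ[R] K ⊗[R] A) ∪
          {x : K ⊗[R] A | ∃ f : A, ε f ∈ Ideal.span {π} ∧
            x = (algebraMap R K π)⁻¹ •
              (Algebra.TensorProduct.includeRight (f ^ q) : K ⊗[R] A)}),
      ∃ r : R,
        Algebra.TensorProduct.productMap (AlgHom.id R K) ((Algebra.ofId R K).comp h) x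
          = algebraMap R K r)
    ∧ ∀ x ∈ Algebra.adjoin R
        (Set.range (Algebra.TensorProduct.includeRight : A →ₐ[R] K ⊗[R] A) ∪
          {x : K ⊗[R] A | ∃ f : A, ε f ∈ Ideal.span {π} ∧
            x = (algebraMap R K π)⁻¹ •
              (Algebra.TensorProduct.includeRight (f ^ q) : K ⊗[R] A)}),
        (∃ r : R,
          Algebra.TensorProduct.productMap (AlgHom.id R K) ((Algebra.ofId R K).comp ε) x
            = algebraMap R K (π * r)) →
        ∃ r : R,
          Algebra.TensorProduct.productMap (AlgHom.id R K) ((Algebra.ofId R K).comp h) x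
            = algebraMap R K (π * r) := by
  have hπK : algebraMap R K π ≠ 0 :=
    (map_ne_zero_iff _ (IsFractionRing.injective R K)).mpr hπ.ne_zero
  have hA₁ := adjoin_le_congruentValuesSubalgebra hπK (hq ▸ Finite.one_lt_card) hh
  refine ⟨fun x hx ↦ ?_, fun x hx ⟨r₀, hr₀⟩ ↦ ?_⟩
  · obtain ⟨r, -, hr, -⟩ := hA₁ hx
    exact ⟨r, hr⟩
  · obtain ⟨r, r', hr, hr', hrr'⟩ := hA₁ hx
    have hr'π : r' = π * r₀ := IsFractionRing.injective R K (hr'.symm.trans hr₀)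
    have hrπ : r ∈ Ideal.span {π} := SModEq.zero.mp <| hrr'.trans <|
      SModEq.zero.mpr (hr'π ▸ Ideal.mul_mem_right r₀ _ (Ideal.mem_span_singleton_self π))
    obtain ⟨u, rfl⟩ := Ideal.mem_span_singleton.mp hrπ
    exact ⟨u, hr⟩

/-- (first congruence subgroup is contained in the dilatation points).
`A₁` is the `R`-subalgebra of `A_K` generated by `A` and all `f^q/π` with
`ε(f) ∈ πR`.  If `h : A → R` satisfies `h(f) ∈ πR` whenever `ε(f) ∈ πR`, then
`h_K` maps `A₁` into `R`, and `h_K(f₁) ∈ πR` for every `f₁ ∈ A₁` with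
`ε_K(f₁) ∈ πR`. -/
theorem stmt_8 (R K A : Type*) [CommRing R] [IsDomain R] [IsDiscreteValuationRing R]
    [Field K] [Algebra R K] [IsFractionRing R K]
    [CommRing A] [Algebra R A] [NoZeroSMulDivisors R A]
    (π : R) (hπ : Irreducible π)
    (q : ℕ) [Finite (IsLocalRing.ResidueField R)]
    (hq : Nat.card (IsLocalRing.ResidueField R) = q)
    (ε h : A →ₐ[R] R)
    (hh : ∀ f : A, ε f ∈ Ideal.span {π} → h f ∈ Ideal.span {π}) :
    (∀ x ∈ Algebra.adjoin R
        (Set.range (Algebra.TensorProduct.includeRight : A →ₐ[R] K ⊗[R] A) ∪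
          {x : K ⊗[R] A | ∃ f : A, ε f ∈ Ideal.span {π} ∧
            x = (algebraMap R K π)⁻¹ •
              (Algebra.TensorProduct.includeRight (f ^ q) : K ⊗[R] A)}),
      ∃ r : R,
        Algebra.TensorProduct.productMap (AlgHom.id R K) ((Algebra.ofId R K).comp h) x
          = algebraMap R K r)
    ∧ ∀ x ∈ Algebra.adjoin R
        (Set.range (Algebra.TensorProduct.includeRight : A →ₐ[R] K ⊗[R] A) ∪
          {x : K ⊗[R] A | ∃ f : A, ε f ∈ Ideal.span {π} ∧
            x = (algebraMap R K π)⁻¹ •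
              (Algebra.TensorProduct.includeRight (f ^ q) : K ⊗[R] A)}),
        (∃ r : R,
          Algebra.TensorProduct.productMap (AlgHom.id R K) ((Algebra.ofId R K).comp ε) x
            = algebraMap R K (π * r)) →
        ∃ r : R,
          Algebra.TensorProduct.productMap (AlgHom.id R K) ((Algebra.ofId R K).comp h) x
            = algebraMap R K (π * r) :=
  stmt_8_general R K A π hπ q hq ε h hh
end

section
/- Let R be a discrete valuation ring with uniformizer π, with normalized valuation v (v(π) = 1, valued in ℕ ∪ {∞} on R with v(0) = ∞). Let n : ℕ → ℕ satisfy: n(0) = 0, n(1) ≥ 1, n(2) = 0, n(i+j) ≤ n(i) + n(j) for all i, j (subadditivity), and n(j) + n(i−j) ≤ n(i) + v(C(i,j)) for all 0 ≤ j ≤ i, where C(i,j) is the image in R of the binomial coefficient (i choose j). Then n(i) = 0 for all even i, n(i) = n(1) for all odd i, and 2·n(1) ≤ v(2) (in ℕ ∪ {∞}). -/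
/-!
Subadditivity and `n 2 = 0` kill `n` on even numbers. The binomial condition for `(i, j) = (2, 1)`
reads `2 n(1) ≤ v(2)`, so `n(1) ≥ 1` forces `π ∣ 2`; then `v(i) = 0` for every odd `i`, and the
condition for `(i, 1)` with `i` odd gives `n(1) ≤ n(i)`, while subadditivity gives `n(i) ≤ n(1)`.
-/

/-- The normalized (additive) valuation attached to the element `π`:
`dvrVal π r = sup {k : π^k ∣ r} ∈ ℕ ∪ {∞}`.  When `π` is a uniformizer of a
DVR this is the normalized valuation, with `dvrVal π π = 1` and
`dvrVal π 0 = ∞`. -/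
noncomputable def dvrVal {R : Type*} [CommRing R] (π : R) (r : R) : ℕ∞ :=
  ⨆ k ∈ {k : ℕ | π ^ k ∣ r}, (k : ℕ∞)

section dvrVal

variable {R : Type*} [CommRing R] {π r : R}

theorem dvrVal_eq_zero_of_not_dvd (h : ¬ π ∣ r) : dvrVal π r = 0 := by
  refine le_antisymm (iSup₂_le fun k hk => ?_) zero_le
  cases k with
  | zero => exact le_rfl
  | succ k => exact absurd ((dvd_pow_self π k.succ_ne_zero).trans hk) h

theorem dvd_of_one_le_dvrVal (h : 1 ≤ dvrVal π r) : π ∣ r := by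
  by_contra h'
  simp [dvrVal_eq_zero_of_not_dvd h'] at h

theorem not_dvd_natCast_of_odd (hπ : ¬ IsUnit π) (h2 : π ∣ 2) {m : ℕ} (hm : Odd m) :
    ¬ π ∣ (m : R) := by
  obtain ⟨k, rfl⟩ := hm
  intro hd
  push_cast at hd
  exact hπ (isUnit_of_dvd_one ((dvd_add_right (h2.mul_right _)).mp hd))

end dvrVal

theorem apply_mul_le_of_subadditive {n : ℕ → ℕ} (hn0 : n 0 = 0)
    (hsub : ∀ i j, n (i + j) ≤ n i + n j) (k m : ℕ) : n (k * m) ≤ k * n m := by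
  induction k with
  | zero => simp [hn0]
  | succ k ih =>
    calc n ((k + 1) * m) = n (k * m + m) := by rw [add_one_mul]
      _ ≤ n (k * m) + n m := hsub _ _
      _ ≤ (k + 1) * n m := by rw [add_one_mul]; omega

theorem stmt_11_general (R : Type*) [CommRing R]
    (π : R) (hπ : Irreducible π)
    (n : ℕ → ℕ) (hn0 : n 0 = 0) (hn1 : 1 ≤ n 1) (hn2 : n 2 = 0)
    (hsub : ∀ i j : ℕ, n (i + j) ≤ n i + n j)
    (hmain : ∀ i j : ℕ, j ≤ i →
      (n j + n (i - j) : ℕ∞) ≤ (n i : ℕ∞) + dvrVal π ((i.choose j : ℕ) : R)) :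
    (∀ i : ℕ, Even i → n i = 0) ∧ (∀ i : ℕ, Odd i → n i = n 1) ∧
      (2 * n 1 : ℕ∞) ≤ dvrVal π (2 : R) := by
  have heven : ∀ i, Even i → n i = 0 := by
    rintro _ ⟨k, rfl⟩
    simpa [← mul_two, hn2] using apply_mul_le_of_subadditive hn0 hsub k 2
  have hv2 : (2 * n 1 : ℕ∞) ≤ dvrVal π 2 := by
    simpa [two_mul, hn2] using hmain 2 1 (by norm_num)
  have hπ2 : π ∣ (2 : R) :=
    dvd_of_one_le_dvrVal (le_trans (by exact_mod_cast (by omega : 1 ≤ 2 * n 1)) hv2)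
  refine ⟨heven, fun i hi => le_antisymm ?_ ?_, hv2⟩
  · obtain ⟨k, rfl⟩ := hi
    have := hsub (2 * k) 1
    have := heven (2 * k) (even_two_mul k)
    omega
  · have hvi : dvrVal π (i : R) = 0 :=
      dvrVal_eq_zero_of_not_dvd (not_dvd_natCast_of_odd hπ.not_isUnit hπ2 hi)
    have h := hmain i 1 hi.pos
    rw [Nat.choose_one_right, hvi, heven (i - 1) (Nat.Odd.sub_odd hi odd_one)] at h
    exact_mod_cast (by simpa using h : (n 1 : ℕ∞) ≤ n i)

/-- If `n : ℕ → ℕ` satisfies `n(0) = 0`, `n(1) ≥ 1`, `n(2) = 0`,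
subadditivity, and `n(j) + n(i−j) ≤ n(i) + v(C(i,j))` for all `0 ≤ j ≤ i`, then
`n(i) = 0` for even `i`, `n(i) = n(1)` for odd `i`, and `2·n(1) ≤ v(2)`. -/
theorem stmt_11 (R : Type*) [CommRing R] [IsDomain R] [IsDiscreteValuationRing R]
    (π : R) (hπ : Irreducible π)
    (n : ℕ → ℕ) (hn0 : n 0 = 0) (hn1 : 1 ≤ n 1) (hn2 : n 2 = 0)
    (hsub : ∀ i j : ℕ, n (i + j) ≤ n i + n j)
    (hmain : ∀ i j : ℕ, j ≤ i →
      (n j + n (i - j) : ℕ∞) ≤ (n i : ℕ∞) + dvrVal π ((i.choose j : ℕ) : R)) :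
    (∀ i : ℕ, Even i → n i = 0) ∧ (∀ i : ℕ, Odd i → n i = n 1) ∧
      (2 * n 1 : ℕ∞) ≤ dvrVal π (2 : R) :=
  stmt_11_general R π hπ n hn0 hn1 hn2 hsub hmain
end

section
/- Let R be a discrete valuation ring with uniformizer π such that 2 ∈ π²R. Consider the quadratic forms on R³ given by q(x, y, z) = −x² − πy² + π²yz and q′(x, y, z) = −x² + π²yz. Then for every unit u ∈ R^×, the quadratic forms q and u·q′ are not equivalent over R (i.e., there is no R-linear automorphism of R³ carrying q to u·q′). -/
/-!
Reduce modulo `π`. If `q(w) = 0` then `π ∣ w₀` and `π ∣ w₁`, since `w₀² = π w₁ (π w₂ - w₁)` and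
`π` is prime. The basis vectors `e₁`, `e₂` are isotropic for `u q′`, so an isometry `g` would send
both into `π R³ + R e₂`; modulo `π` the automorphism `g` would then map the independent
vectors `e₁`, `e₂` into a line, which is impossible.
-/

section

variable {R : Type*} [CommRing R]

lemma Pi.forall_dvd_iff_exists_eq_smul {ι : Type*} (a : R) (v : ι → R) :
    (∀ i, a ∣ v i) ↔ ∃ z, v = a • z := by
  refine ⟨fun h => ?_, fun ⟨z, hz⟩ i => hz ▸ dvd_mul_right a (z i)⟩
  choose z hz using h
  exact ⟨z, funext hz⟩

lemma LinearEquiv.forall_dvd_apply_iff {ι ι' : Type*} (g : (ι → R) ≃ₗ[R] (ι' → R)) (a : R)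
    (v : ι → R) : (∀ i, a ∣ g v i) ↔ ∀ i, a ∣ v i := by
  simp only [Pi.forall_dvd_iff_exists_eq_smul]
  constructor
  · rintro ⟨z, hz⟩
    exact ⟨g.symm z, by rw [← map_smul, ← hz, g.symm_apply_apply]⟩
  · rintro ⟨z, hz⟩
    exact ⟨g z, by rw [hz, map_smul]⟩

/-- The vector `g y k • x - g x k • y` is the combination whose image vanishes at `k`. -/
lemma LinearEquiv.dvd_sub_of_forall_ne_dvd {ι : Type*} (g : (ι → R) ≃ₗ[R] (ι → R)) {a : R}
    {x y : ι → R} {k : ι} (hx : ∀ i ≠ k, a ∣ g x i) (hy : ∀ i ≠ k, a ∣ g y i) (i : ι) :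
    a ∣ g y k * x i - g x k * y i := by
  have hcomb : ∀ j, a ∣ g (g y k • x - g x k • y) j := by
    intro j
    rw [map_sub, map_smul, map_smul]
    by_cases hj : j = k
    · subst hj
      simp [mul_comm]
    · simpa using dvd_sub ((hx j hj).mul_left _) ((hy j hj).mul_left _)
  simpa using (g.forall_dvd_apply_iff a _).mp hcomb i

lemma LinearEquiv.not_forall_ne_dvd_apply_single {ι : Type*} [DecidableEq ι]
    (g : (ι → R) ≃ₗ[R] (ι → R)) {a : R} (ha : ¬IsUnit a) {j₁ j₂ k : ι} (hj : j₁ ≠ j₂)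
    (h₁ : ∀ i ≠ k, a ∣ g (Pi.single j₁ 1) i) (h₂ : ∀ i ≠ k, a ∣ g (Pi.single j₂ 1) i) :
    False := by
  have hk : a ∣ g (Pi.single j₁ 1) k := by
    simpa [Pi.single_apply, hj.symm] using g.dvd_sub_of_forall_ne_dvd h₁ h₂ j₂
  have hall : ∀ i, a ∣ g (Pi.single j₁ 1) i := fun i => by
    by_cases hi : i = k
    · exact hi ▸ hk
    · exact h₁ i hi
  have h1 : a ∣ 1 := by simpa using (g.forall_dvd_apply_iff a _).mp hall j₁
  exact ha (isUnit_of_dvd_one h1)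

lemma Prime.dvd_of_neg_sq_sub_mul_sq_add_sq_mul_mul_eq_zero [IsDomain R] {π a b c : R}
    (hπ : Prime π) (h : -a ^ 2 - π * b ^ 2 + π ^ 2 * b * c = 0) : π ∣ a ∧ π ∣ b := by
  have ha2 : a ^ 2 = π * (b * (π * c - b)) := by linear_combination -h
  obtain ⟨a', rfl⟩ : π ∣ a := hπ.dvd_of_dvd_pow ⟨_, ha2⟩
  have hb : b * (π * c - b) = π * a' ^ 2 :=
    mul_left_cancel₀ hπ.ne_zero (by linear_combination -ha2)
  refine ⟨dvd_mul_right π a', ?_⟩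
  rcases hπ.dvd_mul.mp ⟨_, hb⟩ with hb | ⟨t, ht⟩
  · exact hb
  · exact ⟨c - t, by linear_combination -ht⟩

end

theorem stmt_16_general (R : Type*) [CommRing R] [IsDomain R] [IsDiscreteValuationRing R]
    (π : R) (hπ : Irreducible π) (u : Rˣ) :
    ¬ ∃ g : (Fin 3 → R) ≃ₗ[R] (Fin 3 → R),
        ∀ v : Fin 3 → R,
          -(g v 0) ^ 2 - π * (g v 1) ^ 2 + π ^ 2 * (g v 1) * (g v 2)
            = u * (-(v 0) ^ 2 + π ^ 2 * (v 1) * (v 2)) := by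
  rintro ⟨g, hg⟩
  have hdvd : ∀ j : Fin 3, j ≠ 0 → ∀ i ≠ 2, π ∣ g (Pi.single j 1) i := by
    intro j hj0 i hi
    have hiso : u * (-((Pi.single j 1 : Fin 3 → R) 0) ^ 2
        + π ^ 2 * (Pi.single j 1 : Fin 3 → R) 1 * (Pi.single j 1 : Fin 3 → R) 2) = 0 := by
      fin_cases j <;> simp_all
    obtain ⟨h0, h1⟩ :=
      hπ.prime.dvd_of_neg_sq_sub_mul_sq_add_sq_mul_mul_eq_zero ((hg _).trans hiso)
    fin_cases i <;> simp_all
  exact g.not_forall_ne_dvd_apply_single hπ.not_isUnit (j₁ := 1) (j₂ := 2) (by decide)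
    (hdvd 1 (by decide)) (hdvd 2 (by decide))

/-- Over a DVR `R` with uniformizer `π` such that `2 ∈ π²R`, the
quadratic forms `q(x,y,z) = −x² − πy² + π²yz` and `q′(x,y,z) = −x² + π²yz` on
`R³` satisfy: for every unit `u`, there is no `R`-linear automorphism of `R³`
carrying `q` to `u·q′`. -/
theorem stmt_16 (R : Type*) [CommRing R] [IsDomain R] [IsDiscreteValuationRing R]
    (π : R) (hπ : Irreducible π) (h2 : π ^ 2 ∣ 2) (u : Rˣ) :
    ¬ ∃ g : (Fin 3 → R) ≃ₗ[R] (Fin 3 → R),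
        ∀ v : Fin 3 → R,
          -(g v 0) ^ 2 - π * (g v 1) ^ 2 + π ^ 2 * (g v 1) * (g v 2)
            = u * (-(v 0) ^ 2 + π ^ 2 * (v 1) * (v 2)) :=
  stmt_16_general R π hπ u
end

section
/- Let R′ be a discrete valuation ring with uniformizer ϖ such that 2 ∈ ϖ⁴R′. Then the quadratic forms on R′³ given by q(x, y, z) = −x² − ϖ²y² + ϖ⁴yz and q′(x, y, z) = −x² + ϖ⁴yz are equivalent over R′ (i.e., there is an R′-linear automorphism of R′³ carrying q to q′; explicitly, the substitution x′ = x + ϖy, y′ = y, z′ = z + (2/ϖ³)x is such an isometry). -/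
namespace LinearEquiv

variable {R ι : Type*} [CommRing R] [DecidableEq ι]

def piTransvection {i j : ι} (hij : i ≠ j) (c : R) : (ι → R) ≃ₗ[R] (ι → R) :=
  transvection (f := LinearMap.proj j) (v := Pi.single i c) (by simp [hij.symm])

theorem piTransvection_apply_self {i j : ι} (hij : i ≠ j) (c : R) (v : ι → R) :
    piTransvection hij c v i = v i + c * v j := by
  simp [piTransvection, LinearMap.transvection.apply, mul_comm]

theorem piTransvection_apply_of_ne {i j k : ι} (hij : i ≠ j) (c : R) (v : ι → R) (hki : k ≠ i) :
    piTransvection hij c v k = v k := by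
  simp [piTransvection, LinearMap.transvection.apply, Pi.single_eq_of_ne hki]

end LinearEquiv

open LinearEquiv in
theorem exists_linearEquiv_isometry_shear {R : Type*} [CommRing R] (a b c : R)
    (h : b * c = 2 * a) :
    ∃ g : (Fin 3 → R) ≃ₗ[R] (Fin 3 → R), ∀ v : Fin 3 → R,
      -(g v 0) ^ 2 + b * (g v 1) * (g v 2) = -(v 0) ^ 2 - a ^ 2 * (v 1) ^ 2 + b * (v 1) * (v 2) := by
  refine ⟨(piTransvection (i := 2) (j := 0) (by decide) c).trans
    (piTransvection (i := 0) (j := 1) (by decide) a), fun v => ?_⟩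
  simp only [trans_apply, piTransvection_apply_self,
    piTransvection_apply_of_ne _ _ _ (show (1 : Fin 3) ≠ 0 by decide),
    piTransvection_apply_of_ne _ _ _ (show (2 : Fin 3) ≠ 0 by decide),
    piTransvection_apply_of_ne _ _ _ (show (0 : Fin 3) ≠ 2 by decide),
    piTransvection_apply_of_ne _ _ _ (show (1 : Fin 3) ≠ 2 by decide)]
  linear_combination v 0 * v 1 * h

theorem stmt_17_general (R' : Type*) [CommRing R']
    (ϖ : R') (h2 : ϖ ^ 4 ∣ 2) :
    ∃ g : (Fin 3 → R') ≃ₗ[R'] (Fin 3 → R'),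
      ∀ v : Fin 3 → R',
        -(g v 0) ^ 2 + ϖ ^ 4 * (g v 1) * (g v 2)
          = -(v 0) ^ 2 - ϖ ^ 2 * (v 1) ^ 2 + ϖ ^ 4 * (v 1) * (v 2) := by
  obtain ⟨t, ht⟩ := h2
  -- `ϖ * t` plays the role of `2 / ϖ³`
  exact exists_linearEquiv_isometry_shear ϖ (ϖ ^ 4) (ϖ * t) (by rw [ht]; ring)

/-- Over a DVR `R′` with uniformizer `ϖ` such that `2 ∈ ϖ⁴R′`, the
quadratic forms `q(x,y,z) = −x² − ϖ²y² + ϖ⁴yz` and `q′(x,y,z) = −x² + ϖ⁴yz` on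
`R′³` are equivalent: there is an `R′`-linear automorphism of `R′³` carrying
`q` to `q′`. -/
theorem stmt_17 (R' : Type*) [CommRing R'] [IsDomain R'] [IsDiscreteValuationRing R']
    (ϖ : R') (hϖ : Irreducible ϖ) (h2 : ϖ ^ 4 ∣ 2) :
    ∃ g : (Fin 3 → R') ≃ₗ[R'] (Fin 3 → R'),
      ∀ v : Fin 3 → R',
        -(g v 0) ^ 2 + ϖ ^ 4 * (g v 1) * (g v 2)
          = -(v 0) ^ 2 - ϖ ^ 2 * (v 1) ^ 2 + ϖ ^ 4 * (v 1) * (v 2) :=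
  stmt_17_general R' ϖ h2
end
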